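/- arXiv:2404.17891 — 2 statements merged into one kernel-verified Lean document; each statement's English description precedes it below -/
import Mathlib

section
/- Let a, b, c ∈ ℝ and φ(x,y) = x²y − y³ + ax + by + cy². Suppose φ has four pairwise distinct critical points in ℝ², each of which is nondegenerate. Then these are all the critical points of φ; exactly three of them have Morse index 1 (saddle points) and the remaining one has Morse index 0 or 2 (a local extremum); the three saddle points are not collinear, and the extremum point lies in the interior of the triangle whose vertices are the three saddle points. -/
open MvPolynomial Matrix

/-- The Hessian matrix of a polynomial in two real variables at a point. -/
noncomputable def hess2 (f : MvPolynomial (Fin 2) ℝ) (p : Fin 2 → ℝ) :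
    Matrix (Fin 2) (Fin 2) ℝ :=
  Matrix.of fun i j => eval p (pderiv i (pderiv j f))

/-- A point of ℝ² is a critical point of a polynomial in two variables if both
partial derivatives vanish there. -/
def IsCriticalPt2 (f : MvPolynomial (Fin 2) ℝ) (p : Fin 2 → ℝ) : Prop :=
  ∀ i, eval p (pderiv i f) = 0

/-- The Morse index at a point: the number of negative eigenvalues (with multiplicity)
of the Hessian matrix there (junk value 0 if the Hessian is not symmetric). -/
noncomputable def morseIndex2 (f : MvPolynomial (Fin 2) ℝ) (p : Fin 2 → ℝ) : ℕ :=
  if h : (hess2 f p).IsHermitian then {i : Fin 2 | h.eigenvalues i < 0}.ncard else 0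

/-- The polynomial φ(x,y) = x²y − y³ + ax + by + cy². -/
noncomputable def phiMinus (a b c : ℝ) : MvPolynomial (Fin 2) ℝ :=
  X 0 ^ 2 * X 1 - X 1 ^ 3 + C a * X 0 + C b * X 1 + C c * X 1 ^ 2

/-!
At a critical point of φ the Hessian determinant is `D = 4 (b + 3 c y - 6 y²)`, and the numbers
`1 / D` satisfy the Euler–Jacobi relations `∑ 1 / D_k = 0` and `∑ p_k / D_k = 0`. Once exactly one
`D_k` is positive, the extremum `p_k` is therefore the convex combination of the three saddles
with the weights `-D_k / D_i`.

For `a ≠ 0`, eliminating `x` shows that the heights `y_k` of the critical points are the four roots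
of `12 y⁴ - 8 c y³ - 4 b y² - a²`, whose derivative at `y` is `-2 y D`. Lagrange interpolation then
gives the Euler–Jacobi relations, and the signs of the `D_k` follow because the derivative alternates
in sign along the sorted roots while their product `-a² / 12` is negative. For `a = 0` the critical
points are `(± s, 0)`, `(0, v)`, `(0, w)` and everything is explicit.

No three critical points are collinear: along a line with direction `d` both critical equations are
quadratic, with leading coefficients `2 d₀ d₁` and `d₀² - 3 d₁²`, which vanish together only
for `d = 0`.
-/

open Lagrange

theorem MvPolynomial.pderiv_pderiv_comm {R σ : Type*} [CommSemiring R] (i j : σ)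
    (f : MvPolynomial σ R) : pderiv i (pderiv j f) = pderiv j (pderiv i f) := by
  classical
  induction f using MvPolynomial.induction_on' with
  | monomial s r =>
    simp only [pderiv_monomial]
    rcases eq_or_ne i j with rfl | hij
    · rfl
    · simp only [Finsupp.tsub_apply, Finsupp.single_eq_of_ne hij, Finsupp.single_eq_of_ne hij.symm,
        tsub_zero, mul_right_comm r]
      rw [tsub_right_comm]
  | add f g hf hg => simp only [map_add, hf, hg]

theorem MvPolynomial.pderiv_ofNat {R σ : Type*} [CommSemiring R] (i : σ) (n : ℕ) [n.AtLeastTwo] :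
    pderiv i (no_index (OfNat.ofNat n) : MvPolynomial σ R) = 0 :=
  (pderiv i).map_natCast n

theorem hess2_isHermitian (f : MvPolynomial (Fin 2) ℝ) (q : Fin 2 → ℝ) :
    (hess2 f q).IsHermitian := by
  ext i j
  simp [hess2, pderiv_pderiv_comm i j]

theorem det_hess2_eq_mul_eigenvalues (f : MvPolynomial (Fin 2) ℝ) (q : Fin 2 → ℝ) :
    (hess2 f q).det =
      (hess2_isHermitian f q).eigenvalues 0 * (hess2_isHermitian f q).eigenvalues 1 := by
  simp [(hess2_isHermitian f q).det_eq_prod_eigenvalues]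

section SignCount

variable {R : Type*} [Ring R] [LinearOrder R] [IsStrictOrderedRing R] {e : Fin 2 → R}

theorem ncard_setOf_neg_of_mul_neg (h : e 0 * e 1 < 0) : {i | e i < 0}.ncard = 1 := by
  rw [Set.ncard_eq_one]
  rcases mul_neg_iff.mp h with ⟨h₀, h₁⟩ | ⟨h₀, h₁⟩
  · exact ⟨1, by ext i; fin_cases i <;> simp [h₀.le.not_gt, h₁]⟩
  · exact ⟨0, by ext i; fin_cases i <;> simp [h₀, h₁.le.not_gt]⟩

theorem ncard_setOf_neg_of_mul_pos (h : 0 < e 0 * e 1) :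
    {i | e i < 0}.ncard = 0 ∨ {i | e i < 0}.ncard = 2 := by
  rcases mul_pos_iff.mp h with ⟨h₀, h₁⟩ | ⟨h₀, h₁⟩
  · left
    rw [Set.ncard_eq_zero]
    ext i; fin_cases i <;> simp [h₀.le.not_gt, h₁.le.not_gt]
  · right
    rw [show {i | e i < 0} = Set.univ by ext i; fin_cases i <;> simp [h₀, h₁]]
    simp

end SignCount

theorem morseIndex2_eq_one_of_det_neg {f : MvPolynomial (Fin 2) ℝ} {q : Fin 2 → ℝ}
    (h : (hess2 f q).det < 0) : morseIndex2 f q = 1 := by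
  rw [det_hess2_eq_mul_eigenvalues] at h
  rw [morseIndex2, dif_pos (hess2_isHermitian f q), ncard_setOf_neg_of_mul_neg h]

theorem morseIndex2_eq_zero_or_two_of_det_pos {f : MvPolynomial (Fin 2) ℝ} {q : Fin 2 → ℝ}
    (h : 0 < (hess2 f q).det) : morseIndex2 f q = 0 ∨ morseIndex2 f q = 2 := by
  rw [det_hess2_eq_mul_eigenvalues] at h
  rw [morseIndex2, dif_pos (hess2_isHermitian f q)]
  exact ncard_setOf_neg_of_mul_pos h

theorem quadratic_coeff_eq_zero {R : Type*} [CommRing R] [IsDomain R] {A B C r₀ r₁ r₂ : R}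
    (h₀₁ : r₀ ≠ r₁) (h₀₂ : r₀ ≠ r₂) (h₁₂ : r₁ ≠ r₂) (e₀ : A * r₀ ^ 2 + B * r₀ + C = 0)
    (e₁ : A * r₁ ^ 2 + B * r₁ + C = 0) (e₂ : A * r₂ ^ 2 + B * r₂ + C = 0) : A = 0 := by
  have h : A * ((r₀ - r₁) * (r₀ - r₂) * (r₁ - r₂)) = 0 := by
    linear_combination (r₁ - r₂) * e₀ - (r₀ - r₂) * e₁ + (r₀ - r₁) * e₂
  simpa [sub_ne_zero.2 h₀₁, sub_ne_zero.2 h₀₂, sub_ne_zero.2 h₁₂] using h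

theorem collinear_of_apply_eq {K : Type*} [Field K] {u v w : Fin 2 → K} {i : Fin 2}
    (hv : v i = u i) (hw : w i = u i) : Collinear K ({u, v, w} : Set (Fin 2 → K)) := by
  rw [collinear_iff_of_mem (Set.mem_insert u _)]
  refine ⟨Pi.single (1 - i) 1, ?_⟩
  simp only [Set.mem_insert_iff, Set.mem_singleton_iff, forall_eq_or_imp, forall_eq]
  refine ⟨⟨0, by simp⟩, ⟨v (1 - i) - u (1 - i), ?_⟩, ⟨w (1 - i) - u (1 - i), ?_⟩⟩ <;>
    ext j <;> fin_cases i <;> fin_cases j <;> simp_all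

theorem sum_fin_four_eq_of_ne {M : Type*} [AddCommMonoid M] (f : Fin 4 → M) {i j k l : Fin 4}
    (hij : i ≠ j) (hik : i ≠ k) (hil : i ≠ l) (hjk : j ≠ k) (hjl : j ≠ l) (hkl : k ≠ l) :
    ∑ x, f x = f i + f j + f k + f l := by
  have huniv : (Finset.univ : Finset (Fin 4)) = {i, j, k, l} := by
    revert i j k l; decide
  rw [huniv, Finset.sum_insert (by simp [hij, hik, hil]), Finset.sum_insert (by simp [hjk, hjl]),
    Finset.sum_pair hkl, add_assoc, add_assoc]

theorem exists_convex_combination_of_sum_eq_zero {𝕜 E : Type*} [Field 𝕜] [LinearOrder 𝕜]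
    [IsStrictOrderedRing 𝕜] [AddCommGroup E] [Module 𝕜 E] {w : Fin 4 → 𝕜} {p : Fin 4 → E}
    (hw : ∑ i, w i = 0) (hwp : ∑ i, w i • p i = 0) {k i₁ i₂ i₃ : Fin 4} (h₁₂ : i₁ ≠ i₂)
    (h₁₃ : i₁ ≠ i₃) (h₂₃ : i₂ ≠ i₃) (h₁ : i₁ ≠ k) (h₂ : i₂ ≠ k) (h₃ : i₃ ≠ k)
    (hk : 0 < w k) (hw₁ : w i₁ < 0) (hw₂ : w i₂ < 0) (hw₃ : w i₃ < 0) :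
    ∃ t₁ t₂ t₃ : 𝕜, 0 < t₁ ∧ 0 < t₂ ∧ 0 < t₃ ∧ t₁ + t₂ + t₃ = 1 ∧
      p k = t₁ • p i₁ + t₂ • p i₂ + t₃ • p i₃ := by
  rw [sum_fin_four_eq_of_ne _ h₁.symm h₂.symm h₃.symm h₁₂ h₁₃ h₂₃] at hw hwp
  refine ⟨-w i₁ / w k, -w i₂ / w k, -w i₃ / w k, by bound, by bound, by bound, ?_, ?_⟩
  · field_simp
    linear_combination -hw
  · apply smul_right_injective E hk.ne'
    simp only [smul_add, smul_smul, mul_div_cancel₀ _ hk.ne']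
    linear_combination (norm := module) hwp

theorem sum_pow_mul_nodalWeight_eq_zero {ι F : Type*} [Fintype ι] [DecidableEq ι] [Field F]
    {v : ι → F} (hv : Function.Injective v) {m : ℕ} (hm : m + 1 < Fintype.card ι) :
    ∑ i, v i ^ m * nodalWeight Finset.univ v i = 0 := by
  have h := coeff_eq_sum (s := Finset.univ) hv.injOn (P := Polynomial.X ^ m)
    (by rw [Polynomial.degree_X_pow, Finset.card_univ]; exact_mod_cast (by omega))
  simp only [Polynomial.eval_pow, Polynomial.eval_X, Polynomial.coeff_X_pow, Finset.card_univ,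
    if_neg (show Fintype.card ι - 1 ≠ m by omega)] at h
  simpa only [nodalWeight, Finset.prod_inv_distrib, ← div_eq_mul_inv] using h.symm

theorem Fin.prod_univ_erase {n : ℕ} {M : Type*} [CommMonoid M] (f : Fin (n + 1) → M)
    (k : Fin (n + 1)) : ∏ j ∈ Finset.univ.erase k, f j = ∏ j : Fin n, f (k.succAbove j) := by
  rw [← Finset.compl_singleton, ← Fin.image_succAbove_univ,
    Finset.prod_image Fin.succAbove_right_injective.injOn]

theorem nodalWeight_signs_of_strictMono {y : Fin 4 → ℝ} (hy : StrictMono y) :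
    nodalWeight Finset.univ y 0 < 0 ∧ 0 < nodalWeight Finset.univ y 1 ∧
      nodalWeight Finset.univ y 2 < 0 ∧ 0 < nodalWeight Finset.univ y 3 := by
  have h₀₁ : y 0 < y 1 := hy (by decide)
  have h₁₂ : y 1 < y 2 := hy (by decide)
  have h₂₃ : y 2 < y 3 := hy (by decide)
  have h₀₂ := h₀₁.trans h₁₂
  have h₁₃ := h₁₂.trans h₂₃
  have h₀₃ := h₀₂.trans h₂₃
  simp only [nodalWeight_eq_eval_nodal_erase_inv, eval_nodal, Fin.prod_univ_erase,
    Fin.prod_univ_three, inv_pos, inv_lt_zero]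
  exact ⟨mul_neg_of_pos_of_neg (mul_pos_of_neg_of_neg (sub_neg.2 h₀₁) (sub_neg.2 h₀₂))
      (sub_neg.2 h₀₃),
    mul_pos_of_neg_of_neg (mul_neg_of_pos_of_neg (sub_pos.2 h₀₁) (sub_neg.2 h₁₂)) (sub_neg.2 h₁₃),
    mul_neg_of_pos_of_neg (mul_pos (sub_pos.2 h₀₂) (sub_pos.2 h₁₂)) (sub_neg.2 h₂₃),
    mul_pos (mul_pos (sub_pos.2 h₀₃) (sub_pos.2 h₁₃)) (sub_pos.2 h₂₃)⟩

theorem exists_mul_nodalWeight_neg_of_strictMono {y : Fin 4 → ℝ} (hy : StrictMono y)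
    (hprod : ∏ i, y i < 0) :
    ∃ k, y k * nodalWeight Finset.univ y k < 0 ∧ ∀ l ≠ k, 0 < y l * nodalWeight Finset.univ y l := by
  obtain ⟨w₀, w₁, w₂, w₃⟩ := nodalWeight_signs_of_strictMono hy
  have h₁₂ : y 1 < y 2 := hy (by decide)
  have h₂₃ : y 2 < y 3 := hy (by decide)
  rw [Fin.prod_univ_four] at hprod
  have hne : ∀ i, y i ≠ 0 := fun i hi => by fin_cases i <;> simp_all
  rcases (hne 1).lt_or_gt with h₁ | h₁
  · have h₀ := (hy (by decide : (0 : Fin 4) < 1)).trans h₁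
    have h₂ : y 2 < 0 := (hne 2).lt_or_gt.resolve_right fun h₂ => by
      nlinarith [mul_pos (mul_pos_of_neg_of_neg h₀ h₁) (mul_pos h₂ (h₂.trans h₂₃))]
    have h₃ : 0 < y 3 := (hne 3).lt_or_gt.resolve_left fun h₃ => by
      nlinarith [mul_pos (mul_pos_of_neg_of_neg h₀ h₁) (mul_pos_of_neg_of_neg h₂ h₃)]
    refine ⟨1, mul_neg_of_neg_of_pos h₁ w₁, fun l hl => ?_⟩
    fin_cases l
    exacts [mul_pos_of_neg_of_neg h₀ w₀, absurd rfl hl, mul_pos_of_neg_of_neg h₂ w₂, mul_pos h₃ w₃]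
  · have h₂ := h₁.trans h₁₂
    have h₃ := h₂.trans h₂₃
    have h₀ : y 0 < 0 := (hne 0).lt_or_gt.resolve_right fun h₀ => by
      nlinarith [mul_pos (mul_pos h₀ h₁) (mul_pos h₂ h₃)]
    refine ⟨2, mul_neg_of_pos_of_neg h₂ w₂, fun l hl => ?_⟩
    fin_cases l
    exacts [mul_pos_of_neg_of_neg h₀ w₀, mul_pos h₁ w₁, absurd rfl hl, mul_pos h₃ w₃]

section PhiMinus

variable {a b c : ℝ}

theorem isCriticalPt2_phiMinus_iff {q : Fin 2 → ℝ} :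
    IsCriticalPt2 (phiMinus a b c) q ↔
      2 * q 0 * q 1 + a = 0 ∧ q 0 ^ 2 - 3 * q 1 ^ 2 + 2 * c * q 1 + b = 0 := by
  simp [IsCriticalPt2, Fin.forall_fin_two, phiMinus, pderiv_X]
  constructor <;> rintro ⟨h₀, h₁⟩ <;> constructor <;> linarith

theorem hess2_phiMinus (q : Fin 2 → ℝ) :
    hess2 (phiMinus a b c) q = !![2 * q 1, 2 * q 0; 2 * q 0, 2 * c - 6 * q 1] := by
  ext i j
  fin_cases i <;> fin_cases j <;> simp [hess2, phiMinus, pderiv_X, pderiv_ofNat] <;> ring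

theorem det_hess2_phiMinus_of_isCriticalPt2 {q : Fin 2 → ℝ}
    (hq : IsCriticalPt2 (phiMinus a b c) q) :
    (hess2 (phiMinus a b c) q).det = 4 * (b + 3 * c * q 1 - 6 * q 1 ^ 2) := by
  rw [hess2_phiMinus, Matrix.det_fin_two_of]
  linear_combination -4 * (isCriticalPt2_phiMinus_iff.mp hq).2

theorem not_collinear_of_isCriticalPt2_phiMinus {u v w : Fin 2 → ℝ}
    (hu : IsCriticalPt2 (phiMinus a b c) u) (hv : IsCriticalPt2 (phiMinus a b c) v)
    (hw : IsCriticalPt2 (phiMinus a b c) w) (huv : u ≠ v) (huw : u ≠ w) (hvw : v ≠ w) :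
    ¬ Collinear ℝ ({u, v, w} : Set (Fin 2 → ℝ)) := by
  intro hcol
  obtain ⟨d, hd⟩ := (collinear_iff_of_mem (Set.mem_insert u _)).mp hcol
  obtain ⟨r, rfl⟩ := hd v (by simp)
  obtain ⟨s, rfl⟩ := hd w (by simp)
  have hr : r ≠ 0 := by rintro rfl; simp at huv
  have hs : s ≠ 0 := by rintro rfl; simp at huw
  have hrs : r ≠ s := by rintro rfl; exact hvw rfl
  have along : ∀ t : ℝ, IsCriticalPt2 (phiMinus a b c) (t • d +ᵥ u) →
      (2 * d 0 * d 1) * t ^ 2 + 2 * (u 0 * d 1 + u 1 * d 0) * t + (2 * u 0 * u 1 + a) = 0 ∧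
      (d 0 ^ 2 - 3 * d 1 ^ 2) * t ^ 2 + 2 * (u 0 * d 0 - 3 * u 1 * d 1 + c * d 1) * t +
        (u 0 ^ 2 - 3 * u 1 ^ 2 + 2 * c * u 1 + b) = 0 := by
    intro t ht
    obtain ⟨h₁, h₂⟩ := isCriticalPt2_phiMinus_iff.mp ht
    simp only [vadd_eq_add, Pi.add_apply, Pi.smul_apply, smul_eq_mul] at h₁ h₂
    exact ⟨by linear_combination h₁, by linear_combination h₂⟩
  obtain ⟨hF₀, hG₀⟩ := along 0 (by simpa using hu)
  obtain ⟨hF₁, hG₁⟩ := along r hv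
  obtain ⟨hF₂, hG₂⟩ := along s hw
  have hF := quadratic_coeff_eq_zero hr.symm hs.symm hrs hF₀ hF₁ hF₂
  have hG := quadratic_coeff_eq_zero hr.symm hs.symm hrs hG₀ hG₁ hG₂
  have hd₁ : d 1 = 0 :=
    pow_eq_zero_iff four_ne_zero |>.mp <| by
      linear_combination (-d 1 ^ 2 / 3) * hG + (d 0 * d 1 / 6) * hF
  have hd₀ : d 0 = 0 :=
    pow_eq_zero_iff two_ne_zero |>.mp <| by linear_combination hG + 3 * d 1 * hd₁
  apply huv
  ext i
  fin_cases i <;> simp [hd₀, hd₁]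

end PhiMinus

/-- The last two clauses are the Euler–Jacobi relations: the reciprocal Hessian determinants are
the coefficients of an affine dependence among the four critical points. -/
def IsCriticalQuadruple (f : MvPolynomial (Fin 2) ℝ) (p : Fin 4 → Fin 2 → ℝ) : Prop :=
  (∀ q, IsCriticalPt2 f q → ∃ k, q = p k) ∧
  (∃ k, 0 < (hess2 f (p k)).det ∧ ∀ l ≠ k, (hess2 f (p l)).det < 0) ∧
  ∑ k, ((hess2 f (p k)).det)⁻¹ = 0 ∧ ∑ k, ((hess2 f (p k)).det)⁻¹ • p k = 0

theorem IsCriticalQuadruple.of_comp {f : MvPolynomial (Fin 2) ℝ} {p : Fin 4 → Fin 2 → ℝ}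
    (σ : Equiv.Perm (Fin 4)) (h : IsCriticalQuadruple f (p ∘ σ)) : IsCriticalQuadruple f p := by
  obtain ⟨hall, ⟨k, hk, hl⟩, hw, hwp⟩ := h
  refine ⟨fun q hq => ?_, ⟨σ k, hk, fun l hl' => ?_⟩, ?_, ?_⟩
  · obtain ⟨k, rfl⟩ := hall q hq
    exact ⟨σ k, rfl⟩
  · simpa using hl (σ.symm l) (by rintro rfl; simp at hl')
  · exact (Equiv.sum_comp σ (fun k => ((hess2 f (p k)).det)⁻¹)).symm.trans hw
  · exact (Equiv.sum_comp σ (fun k => ((hess2 f (p k)).det)⁻¹ • p k)).symm.trans hwp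

/-- Eliminating `x` from `2 x y + a = 0` and `x² - 3 y² + 2 c y + b = 0` (multiply the second
equation by `4 y²`). -/
noncomputable def phiMinusEliminant (a b c : ℝ) : Polynomial ℝ :=
  Polynomial.C 12 * Polynomial.X ^ 4 - Polynomial.C (8 * c) * Polynomial.X ^ 3 -
    Polynomial.C (4 * b) * Polynomial.X ^ 2 - Polynomial.C (a ^ 2)

section Eliminant

variable {a b c : ℝ}

theorem eval_phiMinusEliminant (t : ℝ) :
    (phiMinusEliminant a b c).eval t = 12 * t ^ 4 - 8 * c * t ^ 3 - 4 * b * t ^ 2 - a ^ 2 := by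
  simp [phiMinusEliminant, -map_pow, -map_mul]

theorem eval_derivative_phiMinusEliminant (t : ℝ) :
    (Polynomial.derivative (phiMinusEliminant a b c)).eval t =
      -8 * t * (b + 3 * c * t - 6 * t ^ 2) := by
  simp [phiMinusEliminant, -map_pow, -map_mul]
  ring

theorem degree_phiMinusEliminant : (phiMinusEliminant a b c).degree = 4 := by
  unfold phiMinusEliminant
  compute_degree <;> norm_num

theorem leadingCoeff_phiMinusEliminant : (phiMinusEliminant a b c).leadingCoeff = 12 := by
  rw [Polynomial.leadingCoeff, Polynomial.natDegree_eq_of_degree_eq_some degree_phiMinusEliminant]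
  simp [phiMinusEliminant, -map_pow, -map_mul, Polynomial.coeff_X_pow]

theorem eval_phiMinusEliminant_eq_zero {q : Fin 2 → ℝ} (hq : IsCriticalPt2 (phiMinus a b c) q) :
    (phiMinusEliminant a b c).eval (q 1) = 0 := by
  obtain ⟨h₁, h₂⟩ := isCriticalPt2_phiMinus_iff.mp hq
  rw [eval_phiMinusEliminant]
  linear_combination (2 * q 0 * q 1 - a) * h₁ - 4 * q 1 ^ 2 * h₂

theorem phiMinusEliminant_eq_nodal {p : Fin 4 → Fin 2 → ℝ}
    (hcrit : ∀ k, IsCriticalPt2 (phiMinus a b c) (p k)) (hy : Function.Injective fun k => p k 1) :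
    phiMinusEliminant a b c = Polynomial.C 12 * nodal Finset.univ fun k => p k 1 := by
  refine Polynomial.eq_of_degree_le_of_eval_index_eq Finset.univ hy.injOn ?_ ?_ ?_ ?_
  · rw [degree_phiMinusEliminant]; rfl
  · rw [degree_phiMinusEliminant, Polynomial.degree_C_mul (by norm_num), degree_nodal]
    rfl
  · rw [leadingCoeff_phiMinusEliminant, Polynomial.leadingCoeff_C_mul_of_isUnit (by norm_num),
      nodal_monic.leadingCoeff, mul_one]
  · intro i _
    rw [eval_phiMinusEliminant_eq_zero (hcrit i), Polynomial.eval_mul, eval_nodal,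
      Finset.prod_eq_zero (Finset.mem_univ i) (sub_self _), mul_zero]

end Eliminant

section NonzeroA

variable {a b c : ℝ}

theorem snd_ne_zero_of_isCriticalPt2_phiMinus (ha : a ≠ 0) {q : Fin 2 → ℝ}
    (hq : IsCriticalPt2 (phiMinus a b c) q) : q 1 ≠ 0 := by
  intro h
  simpa [h, ha] using (isCriticalPt2_phiMinus_iff.mp hq).1

theorem fst_eq_of_isCriticalPt2_phiMinus (ha : a ≠ 0) {q : Fin 2 → ℝ}
    (hq : IsCriticalPt2 (phiMinus a b c) q) : q 0 = -a / (2 * q 1) := by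
  rw [eq_div_iff (mul_ne_zero two_ne_zero (snd_ne_zero_of_isCriticalPt2_phiMinus ha hq))]
  linear_combination (isCriticalPt2_phiMinus_iff.mp hq).1

theorem eq_of_isCriticalPt2_phiMinus_of_snd_eq (ha : a ≠ 0) {q r : Fin 2 → ℝ}
    (hq : IsCriticalPt2 (phiMinus a b c) q) (hr : IsCriticalPt2 (phiMinus a b c) r)
    (h : q 1 = r 1) : q = r :=
  funext <| Fin.forall_fin_two.2
    ⟨by rw [fst_eq_of_isCriticalPt2_phiMinus ha hq, fst_eq_of_isCriticalPt2_phiMinus ha hr, h], h⟩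

variable {p : Fin 4 → Fin 2 → ℝ}

theorem exists_eq_of_isCriticalPt2_phiMinus (ha : a ≠ 0)
    (hcrit : ∀ k, IsCriticalPt2 (phiMinus a b c) (p k)) (hy : Function.Injective fun k => p k 1)
    {q : Fin 2 → ℝ} (hq : IsCriticalPt2 (phiMinus a b c) q) : ∃ k, q = p k := by
  have h := eval_phiMinusEliminant_eq_zero hq
  rw [phiMinusEliminant_eq_nodal hcrit hy, Polynomial.eval_mul,
    eval_nodal, Polynomial.eval_C] at h
  obtain ⟨k, -, hk⟩ := Finset.prod_eq_zero_iff.mp ((mul_eq_zero.mp h).resolve_left (by norm_num))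
  exact ⟨k, eq_of_isCriticalPt2_phiMinus_of_snd_eq ha hq (hcrit k) (sub_eq_zero.mp hk)⟩

theorem inv_det_hess2_phiMinus (ha : a ≠ 0)
    (hcrit : ∀ k, IsCriticalPt2 (phiMinus a b c) (p k)) (hy : Function.Injective fun k => p k 1)
    (k : Fin 4) : ((hess2 (phiMinus a b c) (p k)).det)⁻¹ =
      -(p k 1 * nodalWeight Finset.univ (fun k => p k 1) k) / 6 := by
  have h := congrArg (fun P => (Polynomial.derivative P).eval (p k 1))
    (phiMinusEliminant_eq_nodal hcrit hy)
  simp only [eval_derivative_phiMinusEliminant, Polynomial.derivative_C_mul, Polynomial.eval_mul,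
    Polynomial.eval_C] at h
  have he := nodalWeight_ne_zero hy.injOn (Finset.mem_univ k)
  rw [nodalWeight_eq_eval_derivative_nodal (Finset.mem_univ k), ne_eq, inv_eq_zero] at he
  rw [nodalWeight_eq_eval_derivative_nodal (Finset.mem_univ k),
    det_hess2_phiMinus_of_isCriticalPt2 (hcrit k)]
  generalize Polynomial.eval (p k 1)
    (Polynomial.derivative (nodal Finset.univ fun k => p k 1)) = e at h he ⊢
  obtain rfl : e = -(2 / 3) * p k 1 * (b + 3 * c * p k 1 - 6 * p k 1 ^ 2) := by
    linear_combination -h / 12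
  have hy₀ := snd_ne_zero_of_isCriticalPt2_phiMinus ha (hcrit k)
  have hX : b + 3 * c * p k 1 - 6 * p k 1 ^ 2 ≠ 0 := fun hX => he (by simp [hX])
  field_simp
  ring

theorem sum_inv_det_hess2_phiMinus_eq_zero (ha : a ≠ 0)
    (hcrit : ∀ k, IsCriticalPt2 (phiMinus a b c) (p k)) (hy : Function.Injective fun k => p k 1) :
    ∑ k, ((hess2 (phiMinus a b c) (p k)).det)⁻¹ = 0 := by
  rw [Finset.sum_congr rfl fun k _ => inv_det_hess2_phiMinus ha hcrit hy k, ← Finset.sum_div,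
    Finset.sum_neg_distrib]
  simpa using sum_pow_mul_nodalWeight_eq_zero hy (m := 1) (by simp)

theorem sum_inv_det_hess2_phiMinus_smul_eq_zero (ha : a ≠ 0)
    (hcrit : ∀ k, IsCriticalPt2 (phiMinus a b c) (p k)) (hy : Function.Injective fun k => p k 1) :
    ∑ k, ((hess2 (phiMinus a b c) (p k)).det)⁻¹ • p k = 0 := by
  ext i
  simp only [Finset.sum_apply, Pi.smul_apply, smul_eq_mul, Pi.zero_apply,
    inv_det_hess2_phiMinus ha hcrit hy]
  fin_cases i
  · calc ∑ k, -(p k 1 * nodalWeight Finset.univ (fun k => p k 1) k) / 6 * p k 0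
        = a / 12 * ∑ k, p k 1 ^ 0 * nodalWeight Finset.univ (fun k => p k 1) k := by
          rw [Finset.mul_sum]
          refine Finset.sum_congr rfl fun k _ => ?_
          have hy₀ := snd_ne_zero_of_isCriticalPt2_phiMinus ha (hcrit k)
          rw [fst_eq_of_isCriticalPt2_phiMinus ha (hcrit k)]
          field_simp
          ring
      _ = 0 := by rw [sum_pow_mul_nodalWeight_eq_zero hy (by simp), mul_zero]
  · calc ∑ k, -(p k 1 * nodalWeight Finset.univ (fun k => p k 1) k) / 6 * p k 1
        = -(1 / 6) * ∑ k, p k 1 ^ 2 * nodalWeight Finset.univ (fun k => p k 1) k := by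
          rw [Finset.mul_sum]
          exact Finset.sum_congr rfl fun k _ => by ring
      _ = 0 := by rw [sum_pow_mul_nodalWeight_eq_zero hy (by simp), mul_zero]

theorem prod_snd_neg_of_isCriticalPt2_phiMinus (ha : a ≠ 0)
    (hcrit : ∀ k, IsCriticalPt2 (phiMinus a b c) (p k)) (hy : Function.Injective fun k => p k 1) :
    ∏ k, p k 1 < 0 := by
  have h := congrArg (Polynomial.eval 0) (phiMinusEliminant_eq_nodal hcrit hy)
  rw [eval_phiMinusEliminant, Polynomial.eval_mul, eval_nodal, Polynomial.eval_C] at h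
  simp only [Fin.prod_univ_four] at h ⊢
  nlinarith [sq_pos_of_ne_zero ha]

theorem exists_det_hess2_phiMinus_pos (ha : a ≠ 0)
    (hcrit : ∀ k, IsCriticalPt2 (phiMinus a b c) (p k)) (hy : StrictMono fun k => p k 1) :
    ∃ k, 0 < (hess2 (phiMinus a b c) (p k)).det ∧ ∀ l ≠ k, (hess2 (phiMinus a b c) (p l)).det < 0 := by
  obtain ⟨k, hk, hl⟩ := exists_mul_nodalWeight_neg_of_strictMono hy
    (prod_snd_neg_of_isCriticalPt2_phiMinus ha hcrit hy.injective)
  have hinv := inv_det_hess2_phiMinus ha hcrit hy.injective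
  exact ⟨k, inv_pos.1 (by rw [hinv]; linarith),
    fun l hlk => inv_lt_zero.1 (by rw [hinv]; linarith [hl l hlk])⟩

theorem isCriticalQuadruple_phiMinus_of_ne_zero (ha : a ≠ 0) (hinj : Function.Injective p)
    (hcrit : ∀ k, IsCriticalPt2 (phiMinus a b c) (p k)) : IsCriticalQuadruple (phiMinus a b c) p := by
  have hy : Function.Injective fun k => p k 1 := fun i j h =>
    hinj (eq_of_isCriticalPt2_phiMinus_of_snd_eq ha (hcrit i) (hcrit j) h)
  set σ := Tuple.sort fun k => p k 1
  have hσ : StrictMono fun k => p (σ k) 1 :=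
    (Tuple.monotone_sort _).strictMono_of_injective (hy.comp σ.injective)
  have hcrit' : ∀ k, IsCriticalPt2 (phiMinus a b c) (p (σ k)) := fun k => hcrit (σ k)
  exact IsCriticalQuadruple.of_comp σ
    ⟨fun _ hq => exists_eq_of_isCriticalPt2_phiMinus ha hcrit' hσ.injective hq,
      exists_det_hess2_phiMinus_pos ha hcrit' hσ,
      sum_inv_det_hess2_phiMinus_eq_zero ha hcrit' hσ.injective,
      sum_inv_det_hess2_phiMinus_smul_eq_zero ha hcrit' hσ.injective⟩
end NonzeroA

section ZeroA

variable {b c : ℝ}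

theorem exists_eq_of_isCriticalPt2_phiMinus_zero {s v w : ℝ} (hc : 3 * (v + w) = 2 * c)
    (hb : 3 * v * w = -b) (hsb : s ^ 2 = -b) {q : Fin 2 → ℝ}
    (hq : IsCriticalPt2 (phiMinus 0 b c) q) : ∃ k, q = ![![s, 0], ![-s, 0], ![0, v], ![0, w]] k := by
  obtain ⟨h₁, h₂⟩ := isCriticalPt2_phiMinus_iff.mp hq
  rcases mul_eq_zero.mp (show q 0 * q 1 = 0 by linarith) with hx | hy
  · have h : (q 1 - v) * (q 1 - w) = 0 := by
      linear_combination (-1 / 3 : ℝ) * h₂ - (q 1 / 3) * hc + hb / 3 + (q 0 / 3) * hx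
    rcases mul_eq_zero.mp h with h | h
    · exact ⟨2, funext <| Fin.forall_fin_two.2 ⟨by simpa using hx, by simpa using sub_eq_zero.mp h⟩⟩
    · exact ⟨3, funext <| Fin.forall_fin_two.2 ⟨by simpa using hx, by simpa using sub_eq_zero.mp h⟩⟩
  · have h : (q 0 - s) * (q 0 + s) = 0 := by
      linear_combination h₂ - hsb + (3 * q 1 - 2 * c) * hy
    rcases mul_eq_zero.mp h with h | h
    · exact ⟨0, funext <| Fin.forall_fin_two.2 ⟨by simpa using sub_eq_zero.mp h, by simpa using hy⟩⟩
    · exact ⟨1, funext <| Fin.forall_fin_two.2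
        ⟨by simpa using eq_neg_of_add_eq_zero_left h, by simpa using hy⟩⟩

theorem isCriticalQuadruple_phiMinus_zero_of_roots {s v w : ℝ} (hs : s ≠ 0) (hvw : v ≠ w)
    (hc : 3 * (v + w) = 2 * c) (hb : 3 * v * w = -b) (hsb : s ^ 2 = -b) :
    IsCriticalQuadruple (phiMinus 0 b c) ![![s, 0], ![-s, 0], ![0, v], ![0, w]] := by
  have hdet : ∀ q, (hess2 (phiMinus 0 b c) q).det = 2 * q 1 * (2 * c - 6 * q 1) - 4 * q 0 ^ 2 :=
    fun q => by rw [hess2_phiMinus, Matrix.det_fin_two_of]; ring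
  have hvw' : v - w ≠ 0 := sub_ne_zero.mpr hvw
  have hvw₀ : 0 < v * w := by nlinarith [sq_pos_of_ne_zero hs]
  have hv : v ≠ 0 := by rintro rfl; simp at hvw₀
  have hw : w ≠ 0 := by rintro rfl; simp at hvw₀
  have hD₂ : 2 * v * (2 * c - 6 * v) = -6 * v * (v - w) := by linear_combination -2 * v * hc
  have hD₃ : 2 * w * (2 * c - 6 * w) = 6 * w * (v - w) := by linear_combination -2 * w * hc
  refine ⟨fun q hq => exists_eq_of_isCriticalPt2_phiMinus_zero hc hb hsb hq, ?_, ?_, ?_⟩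
  · have h₂₃ : -6 * v * (v - w) * (6 * w * (v - w)) < 0 := by
      nlinarith [mul_pos hvw₀ (sq_pos_of_ne_zero hvw')]
    rcases mul_neg_iff.mp h₂₃ with ⟨h₂, h₃⟩ | ⟨h₂, h₃⟩
    · refine ⟨2, by simpa [hdet, hD₂] using h₂, fun l hl => ?_⟩
      fin_cases l <;> simp [hdet, hD₃] at hl ⊢
      all_goals first | exact sq_pos_of_ne_zero hs | linarith
    · refine ⟨3, by simpa [hdet, hD₃] using h₃, fun l hl => ?_⟩
      fin_cases l <;> simp [hdet, hD₂] at hl ⊢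
      all_goals first | exact sq_pos_of_ne_zero hs | linarith
  · simp [Fin.sum_univ_four, hdet, hD₂, hD₃]
    field_simp
    linear_combination (4 * (v - w)) * hsb - 4 * (v - w) * hb
  · ext i
    fin_cases i <;> simp [Fin.sum_univ_four, hdet, hD₂, hD₃]
    field_simp
    ring

variable {p : Fin 4 → Fin 2 → ℝ}

theorem isCriticalQuadruple_phiMinus_zero_of_axes (hinj : Function.Injective p)
    (hcrit : ∀ k, IsCriticalPt2 (phiMinus 0 b c) (p k))
    (h₀ : p 0 1 = 0) (h₁ : p 1 1 = 0) (h₂ : p 2 1 ≠ 0) (h₃ : p 3 1 ≠ 0) :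
    IsCriticalQuadruple (phiMinus 0 b c) p := by
  have e := fun k => isCriticalPt2_phiMinus_iff.mp (hcrit k)
  have hx₂ : p 2 0 = 0 := by simpa [h₂] using (e 2).1
  have hx₃ : p 3 0 = 0 := by simpa [h₃] using (e 3).1
  have hx₁ : p 1 0 = -p 0 0 := by
    have hne : p 0 0 - p 1 0 ≠ 0 := sub_ne_zero.mpr fun h =>
      hinj.ne (by decide : (0 : Fin 4) ≠ 1) (funext <| Fin.forall_fin_two.2 ⟨h, h₀.trans h₁.symm⟩)
    have h : (p 0 0 - p 1 0) * (p 0 0 + p 1 0) = 0 := by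
      linear_combination (e 0).2 - (e 1).2 + 3 * (p 0 1 + p 1 1) * (h₀ - h₁) - 2 * c * (h₀ - h₁)
    linear_combination (mul_eq_zero.mp h).resolve_left hne
  have hvw : p 2 1 ≠ p 3 1 := fun h =>
    hinj.ne (by decide : (2 : Fin 4) ≠ 3) (funext <| Fin.forall_fin_two.2 ⟨hx₂.trans hx₃.symm, h⟩)
  have hs : p 0 0 ≠ 0 := fun h => hinj.ne (by decide : (0 : Fin 4) ≠ 1)
    (funext <| Fin.forall_fin_two.2 ⟨by rw [hx₁, h, neg_zero], h₀.trans h₁.symm⟩)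
  have hc : 3 * (p 2 1 + p 3 1) = 2 * c := by
    have h : (p 2 1 - p 3 1) * (2 * c - 3 * (p 2 1 + p 3 1)) = 0 := by
      linear_combination (e 2).2 - (e 3).2 - (p 2 0 + p 3 0) * (hx₂ - hx₃)
    linear_combination -(mul_eq_zero.mp h).resolve_left (sub_ne_zero.mpr hvw)
  have hb : 3 * p 2 1 * p 3 1 = -b := by
    linear_combination (e 2).2 + p 2 1 * hc - p 2 0 * hx₂
  have hsb : p 0 0 ^ 2 = -b := by
    linear_combination (e 0).2 + (3 * p 0 1 - 2 * c) * h₀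
  have hp : p = ![![p 0 0, 0], ![-p 0 0, 0], ![0, p 2 1], ![0, p 3 1]] := by
    ext k i
    fin_cases k <;> fin_cases i <;> simp [h₀, h₁, hx₁, hx₂, hx₃]
  rw [hp]
  exact isCriticalQuadruple_phiMinus_zero_of_roots hs hvw hc hb hsb

/-- Sorting by `y²` lists the critical points on the `x`-axis first; since no three critical
points are collinear, each axis carries exactly two of them. -/
theorem isCriticalQuadruple_phiMinus_zero (hinj : Function.Injective p)
    (hcrit : ∀ k, IsCriticalPt2 (phiMinus 0 b c) (p k)) :
    IsCriticalQuadruple (phiMinus 0 b c) p := by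
  set σ := Tuple.sort fun k => p k 1 ^ 2
  have hmono : Monotone fun k => p (σ k) 1 ^ 2 := Tuple.monotone_sort (fun k => p k 1 ^ 2)
  have axis : ∀ {i j k : Fin 4} (l : Fin 2), i ≠ j → i ≠ k → j ≠ k →
      p (σ j) l = p (σ i) l → p (σ k) l = p (σ i) l → False :=
    fun l hij hik hjk hj hk => not_collinear_of_isCriticalPt2_phiMinus (hcrit _) (hcrit _)
      (hcrit _) ((hinj.comp σ.injective).ne hij) ((hinj.comp σ.injective).ne hik)
      ((hinj.comp σ.injective).ne hjk) (collinear_of_apply_eq hj hk)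
  have hx : ∀ k, p k 1 ≠ 0 → p k 0 = 0 := fun k hk => by
    simpa [hk] using (isCriticalPt2_phiMinus_iff.mp (hcrit k)).1
  have below : ∀ {i j : Fin 4}, i ≤ j → p (σ j) 1 = 0 → p (σ i) 1 = 0 := fun hij hj =>
    pow_eq_zero_iff two_ne_zero |>.mp <| le_antisymm (by simpa [hj] using hmono hij) (sq_nonneg _)
  have h₂ : p (σ 2) 1 ≠ 0 := fun h =>
    axis (i := 0) (j := 1) (k := 2) 1 (by decide) (by decide) (by decide)
      ((below (by decide) h).trans (below (by decide) h).symm) (h.trans (below (by decide) h).symm)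
  have h₃ : p (σ 3) 1 ≠ 0 := fun h => h₂ (below (by decide) h)
  have h₁ : p (σ 1) 1 = 0 := by
    by_contra h₁
    exact axis (i := 1) (j := 2) (k := 3) 0 (by decide) (by decide) (by decide)
      ((hx _ h₂).trans (hx _ h₁).symm) ((hx _ h₃).trans (hx _ h₁).symm)
  exact IsCriticalQuadruple.of_comp σ (isCriticalQuadruple_phiMinus_zero_of_axes
    (hinj.comp σ.injective) (fun k => hcrit (σ k)) (below (by decide) h₁) h₁ h₂ h₃)

end ZeroA

theorem isCriticalQuadruple_phiMinus {a b c : ℝ} {p : Fin 4 → Fin 2 → ℝ}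
    (hinj : Function.Injective p) (hcrit : ∀ k, IsCriticalPt2 (phiMinus a b c) (p k)) :
    IsCriticalQuadruple (phiMinus a b c) p := by
  rcases eq_or_ne a 0 with rfl | ha
  · exact isCriticalQuadruple_phiMinus_zero hinj hcrit
  · exact isCriticalQuadruple_phiMinus_of_ne_zero ha hinj hcrit

theorem phiMinus_four_critical_points_general (a b c : ℝ)
    (p : Fin 4 → (Fin 2 → ℝ)) (hinj : Function.Injective p)
    (hcrit : ∀ k, IsCriticalPt2 (phiMinus a b c) (p k)) :
    (∀ q, IsCriticalPt2 (phiMinus a b c) q → ∃ k, q = p k) ∧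
    (∃ k : Fin 4,
      (morseIndex2 (phiMinus a b c) (p k) = 0 ∨ morseIndex2 (phiMinus a b c) (p k) = 2) ∧
      (∀ l, l ≠ k → morseIndex2 (phiMinus a b c) (p l) = 1) ∧
      (∀ i₁ i₂ i₃ : Fin 4, i₁ ≠ i₂ → i₁ ≠ i₃ → i₂ ≠ i₃ →
        i₁ ≠ k → i₂ ≠ k → i₃ ≠ k →
        ¬ Collinear ℝ ({p i₁, p i₂, p i₃} : Set (Fin 2 → ℝ)) ∧
        ∃ t₁ t₂ t₃ : ℝ, 0 < t₁ ∧ 0 < t₂ ∧ 0 < t₃ ∧ t₁ + t₂ + t₃ = 1 ∧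
          p k = t₁ • p i₁ + t₂ • p i₂ + t₃ • p i₃)) := by
  obtain ⟨hall, ⟨k, hk, hl⟩, hw, hwp⟩ := isCriticalQuadruple_phiMinus hinj hcrit
  refine ⟨hall, k, morseIndex2_eq_zero_or_two_of_det_pos hk,
    fun l hlk => morseIndex2_eq_one_of_det_neg (hl l hlk), ?_⟩
  intro i₁ i₂ i₃ h₁₂ h₁₃ h₂₃ h₁ h₂ h₃
  exact ⟨not_collinear_of_isCriticalPt2_phiMinus (hcrit _) (hcrit _) (hcrit _)
      (hinj.ne h₁₂) (hinj.ne h₁₃) (hinj.ne h₂₃),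
    exists_convex_combination_of_sum_eq_zero hw hwp h₁₂ h₁₃ h₂₃ h₁ h₂ h₃ (inv_pos.2 hk)
      (inv_lt_zero.2 (hl _ h₁)) (inv_lt_zero.2 (hl _ h₂)) (inv_lt_zero.2 (hl _ h₃))⟩

/-- If φ(x,y) = x²y − y³ + ax + by + cy² has four pairwise distinct nondegenerate
critical points, then these are all its critical points; exactly three of them are
saddles (index 1) and the remaining one is a local extremum (index 0 or 2); the
three saddles are not collinear, and the extremum lies in the interior of the
triangle spanned by the saddles. -/
theorem phiMinus_four_critical_points (a b c : ℝ)
    (p : Fin 4 → (Fin 2 → ℝ)) (hinj : Function.Injective p)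
    (hcrit : ∀ k, IsCriticalPt2 (phiMinus a b c) (p k))
    (hnd : ∀ k, (hess2 (phiMinus a b c) (p k)).det ≠ 0) :
    (∀ q, IsCriticalPt2 (phiMinus a b c) q → ∃ k, q = p k) ∧
    (∃ k : Fin 4,
      (morseIndex2 (phiMinus a b c) (p k) = 0 ∨ morseIndex2 (phiMinus a b c) (p k) = 2) ∧
      (∀ l, l ≠ k → morseIndex2 (phiMinus a b c) (p l) = 1) ∧
      (∀ i₁ i₂ i₃ : Fin 4, i₁ ≠ i₂ → i₁ ≠ i₃ → i₂ ≠ i₃ →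
        i₁ ≠ k → i₂ ≠ k → i₃ ≠ k →
        ¬ Collinear ℝ ({p i₁, p i₂, p i₃} : Set (Fin 2 → ℝ)) ∧
        ∃ t₁ t₂ t₃ : ℝ, 0 < t₁ ∧ 0 < t₂ ∧ 0 < t₃ ∧ t₁ + t₂ + t₃ = 1 ∧
          p k = t₁ • p i₁ + t₂ • p i₂ + t₃ • p i₃)) :=
  phiMinus_four_critical_points_general a b c p hinj hcrit
end

section
/- For every ε > 0 there exists δ₀ > 0 such that for all δ with 0 < δ < δ₀, the polynomial function f(x,y,z) = x³ − 3xy² + z³ − 3εz + δz(x² + y²) has exactly eight critical points in ℝ³, all of them nondegenerate, with exactly one of Morse index 0, exactly three of Morse index 1, exactly three of Morse index 2, and exactly one of Morse index 3. -/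
open MvPolynomial Matrix

/-- The Hessian matrix of a polynomial in three real variables at a point. -/
noncomputable def hess3 (f : MvPolynomial (Fin 3) ℝ) (p : Fin 3 → ℝ) :
    Matrix (Fin 3) (Fin 3) ℝ :=
  Matrix.of fun i j => eval p (pderiv i (pderiv j f))

/-- A point of ℝ³ is a critical point of a polynomial in three variables if all three
partial derivatives vanish there. -/
def IsCriticalPt3 (f : MvPolynomial (Fin 3) ℝ) (p : Fin 3 → ℝ) : Prop :=
  ∀ i, eval p (pderiv i f) = 0

/-- The Morse index at a point: the number of negative eigenvalues (with multiplicity)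
of the Hessian matrix there (junk value 0 if the Hessian is not symmetric). -/
noncomputable def morseIndex3 (f : MvPolynomial (Fin 3) ℝ) (p : Fin 3 → ℝ) : ℕ :=
  if h : (hess3 f p).IsHermitian then {i : Fin 3 | h.eigenvalues i < 0}.ncard else 0

/-- The polynomial f(x,y,z) = x³ − 3xy² + z³ − 3εz + δz(x² + y²). -/
noncomputable def fPert' (ε δ : ℝ) : MvPolynomial (Fin 3) ℝ :=
  X 0 ^ 3 - C 3 * X 0 * X 1 ^ 2 + X 2 ^ 3 - C (3 * ε) * X 2
    + C δ * X 2 * (X 0 ^ 2 + X 1 ^ 2)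

/-! ### Auxiliary lemmas -/

lemma pderiv_two' (i : Fin 3) : pderiv i (2 : MvPolynomial (Fin 3) ℝ) = 0 := by
  rw [show (2 : MvPolynomial (Fin 3) ℝ) = C 2 by rw [map_ofNat]]; exact pderiv_C

lemma pderiv_three' (i : Fin 3) : pderiv i (3 : MvPolynomial (Fin 3) ℝ) = 0 := by
  rw [show (3 : MvPolynomial (Fin 3) ℝ) = C 3 by rw [map_ofNat]]; exact pderiv_C

/-- convenient notation for points of ℝ³ -/
def pt (x y z : ℝ) : Fin 3 → ℝ := ![x, y, z]

@[simp] lemma pt_zero (x y z : ℝ) : pt x y z 0 = x := rfl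
@[simp] lemma pt_one (x y z : ℝ) : pt x y z 1 = y := rfl
@[simp] lemma pt_two (x y z : ℝ) : pt x y z 2 = z := rfl

lemma pt_inj {x y z x' y' z' : ℝ} : pt x y z = pt x' y' z' ↔ x = x' ∧ y = y' ∧ z = z' := by
  constructor
  · intro h
    exact ⟨congrFun h 0, congrFun h 1, congrFun h 2⟩
  · rintro ⟨rfl, rfl, rfl⟩; rfl

lemma fin3_eta (p : Fin 3 → ℝ) : p = pt (p 0) (p 1) (p 2) := by
  funext i; fin_cases i <;> rfl

/-! first derivatives -/

lemma evalpd0 (ε δ : ℝ) (p : Fin 3 → ℝ) :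
    eval p (pderiv 0 (fPert' ε δ)) = 3 * p 0 ^ 2 - 3 * p 1 ^ 2 + 2 * δ * p 2 * p 0 := by
  simp [fPert', pderiv_mul, pderiv_pow, pderiv_C, pderiv_two', pderiv_three']; ring

lemma evalpd1 (ε δ : ℝ) (p : Fin 3 → ℝ) :
    eval p (pderiv 1 (fPert' ε δ)) = -6 * p 0 * p 1 + 2 * δ * p 2 * p 1 := by
  simp [fPert', pderiv_mul, pderiv_pow, pderiv_C, pderiv_two', pderiv_three']; ring

lemma evalpd2 (ε δ : ℝ) (p : Fin 3 → ℝ) :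
    eval p (pderiv 2 (fPert' ε δ)) = 3 * p 2 ^ 2 - 3 * ε + δ * (p 0 ^ 2 + p 1 ^ 2) := by
  simp [fPert', pderiv_mul, pderiv_pow, pderiv_C, pderiv_two', pderiv_three']; ring

lemma crit_iff (ε δ : ℝ) (p : Fin 3 → ℝ) :
    IsCriticalPt3 (fPert' ε δ) p ↔
      (3 * p 0 ^ 2 - 3 * p 1 ^ 2 + 2 * δ * p 2 * p 0 = 0 ∧
       -6 * p 0 * p 1 + 2 * δ * p 2 * p 1 = 0 ∧
       3 * p 2 ^ 2 - 3 * ε + δ * (p 0 ^ 2 + p 1 ^ 2) = 0) := by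
  constructor
  · intro h
    exact ⟨(evalpd0 ε δ p).symm.trans (h 0), (evalpd1 ε δ p).symm.trans (h 1),
      (evalpd2 ε δ p).symm.trans (h 2)⟩
  · rintro ⟨h0, h1, h2⟩ i
    fin_cases i
    · exact (evalpd0 ε δ p).trans h0
    · exact (evalpd1 ε δ p).trans h1
    · exact (evalpd2 ε δ p).trans h2

/-! second derivatives -/

lemma hessE00 (ε δ : ℝ) (p : Fin 3 → ℝ) :
    eval p (pderiv 0 (pderiv 0 (fPert' ε δ))) = 6 * p 0 + 2 * δ * p 2 := by
  simp [fPert', pderiv_mul, pderiv_pow, pderiv_C, pderiv_two', pderiv_three']; ring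

lemma hessE01 (ε δ : ℝ) (p : Fin 3 → ℝ) :
    eval p (pderiv 0 (pderiv 1 (fPert' ε δ))) = -6 * p 1 := by
  simp [fPert', pderiv_mul, pderiv_pow, pderiv_C, pderiv_two', pderiv_three']; ring

lemma hessE02 (ε δ : ℝ) (p : Fin 3 → ℝ) :
    eval p (pderiv 0 (pderiv 2 (fPert' ε δ))) = 2 * δ * p 0 := by
  simp [fPert', pderiv_mul, pderiv_pow, pderiv_C, pderiv_two', pderiv_three']; ring

lemma hessE10 (ε δ : ℝ) (p : Fin 3 → ℝ) :
    eval p (pderiv 1 (pderiv 0 (fPert' ε δ))) = -6 * p 1 := by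
  simp [fPert', pderiv_mul, pderiv_pow, pderiv_C, pderiv_two', pderiv_three']; ring

lemma hessE11 (ε δ : ℝ) (p : Fin 3 → ℝ) :
    eval p (pderiv 1 (pderiv 1 (fPert' ε δ))) = -6 * p 0 + 2 * δ * p 2 := by
  simp [fPert', pderiv_mul, pderiv_pow, pderiv_C, pderiv_two', pderiv_three']; ring

lemma hessE12 (ε δ : ℝ) (p : Fin 3 → ℝ) :
    eval p (pderiv 1 (pderiv 2 (fPert' ε δ))) = 2 * δ * p 1 := by
  simp [fPert', pderiv_mul, pderiv_pow, pderiv_C, pderiv_two', pderiv_three']; ring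

lemma hessE20 (ε δ : ℝ) (p : Fin 3 → ℝ) :
    eval p (pderiv 2 (pderiv 0 (fPert' ε δ))) = 2 * δ * p 0 := by
  simp [fPert', pderiv_mul, pderiv_pow, pderiv_C, pderiv_two', pderiv_three']; ring

lemma hessE21 (ε δ : ℝ) (p : Fin 3 → ℝ) :
    eval p (pderiv 2 (pderiv 1 (fPert' ε δ))) = 2 * δ * p 1 := by
  simp [fPert', pderiv_mul, pderiv_pow, pderiv_C, pderiv_two', pderiv_three']; ring

lemma hessE22 (ε δ : ℝ) (p : Fin 3 → ℝ) :
    eval p (pderiv 2 (pderiv 2 (fPert' ε δ))) = 6 * p 2 := by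
  simp [fPert', pderiv_mul, pderiv_pow, pderiv_C, pderiv_two', pderiv_three']; ring

lemma hess3_fPert' (ε δ : ℝ) (p : Fin 3 → ℝ) :
    hess3 (fPert' ε δ) p =
      !![6 * p 0 + 2 * δ * p 2, -6 * p 1, 2 * δ * p 0;
         -6 * p 1, -6 * p 0 + 2 * δ * p 2, 2 * δ * p 1;
         2 * δ * p 0, 2 * δ * p 1, 6 * p 2] := by
  ext i j
  fin_cases i <;> fin_cases j
  · exact hessE00 ε δ p
  · exact hessE01 ε δ p
  · exact hessE02 ε δ p
  · exact hessE10 ε δ p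
  · exact hessE11 ε δ p
  · exact hessE12 ε δ p
  · exact hessE20 ε δ p
  · exact hessE21 ε δ p
  · exact hessE22 ε δ p

lemma hess3_fPert'_pt (ε δ x y z : ℝ) :
    hess3 (fPert' ε δ) (pt x y z) =
      !![6 * x + 2 * δ * z, -6 * y, 2 * δ * x;
         -6 * y, -6 * x + 2 * δ * z, 2 * δ * y;
         2 * δ * x, 2 * δ * y, 6 * z] := by
  rw [hess3_fPert']; simp only [pt_zero, pt_one, pt_two]

lemma hess3_fPert'_herm (ε δ : ℝ) (p : Fin 3 → ℝ) :
    (hess3 (fPert' ε δ) p).IsHermitian := by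
  have key : ∀ M : Matrix (Fin 3) (Fin 3) ℝ, Mᴴ = M → M.IsHermitian := fun _ h => h
  apply key
  rw [hess3_fPert']
  ext i j
  fin_cases i <;> fin_cases j <;> simp [Matrix.conjTranspose_apply]

/-! eigenvalue counting machinery -/

lemma ncard_neg_fin3 (e : Fin 3 → ℝ) :
    {i : Fin 3 | e i < 0}.ncard =
      (if e 0 < 0 then 1 else 0) + ((if e 1 < 0 then 1 else 0) + (if e 2 < 0 then 1 else 0)) := by
  classical
  have h : {i : Fin 3 | e i < 0} = ↑(Finset.univ.filter (fun i => e i < 0)) := by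
    ext i; simp
  rw [h, Set.ncard_coe_finset, Finset.card_filter, Fin.sum_univ_three]
  ring

lemma herm_prod_eigen {A : Matrix (Fin 3) (Fin 3) ℝ} (h : A.IsHermitian) :
    h.eigenvalues 0 * h.eigenvalues 1 * h.eigenvalues 2 = A.det := by
  have := h.det_eq_prod_eigenvalues
  rw [Fin.prod_univ_three] at this
  simpa using this.symm

lemma herm_sum_eigen {A : Matrix (Fin 3) (Fin 3) ℝ} (h : A.IsHermitian) :
    h.eigenvalues 0 + h.eigenvalues 1 + h.eigenvalues 2 = A.trace := by
  have hst := h.spectral_theorem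
  have : A.trace = (Matrix.diagonal (RCLike.ofReal ∘ h.eigenvalues) : Matrix (Fin 3) (Fin 3) ℝ).trace := by
    nth_rewrite 1 [hst]
    rw [Unitary.conjStarAlgAut_apply, Matrix.trace_mul_cycle]
    rw [show star (h.eigenvectorUnitary : Matrix (Fin 3) (Fin 3) ℝ) *
        (h.eigenvectorUnitary : Matrix (Fin 3) (Fin 3) ℝ) = 1 from Unitary.coe_star_mul_self _,
      one_mul]
  rw [this, Matrix.trace_diagonal, Fin.sum_univ_three]
  simp

lemma herm_eigen_neg {A : Matrix (Fin 3) (Fin 3) ℝ} (h : A.IsHermitian)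
    (hneg : (-A).PosDef) (i : Fin 3) : h.eigenvalues i < 0 := by
  have hv : (⇑(h.eigenvectorBasis i) : Fin 3 → ℝ) ≠ 0 := by
    intro hz
    exact h.eigenvectorBasis.orthonormal.ne_zero i (by ext j; exact congrFun hz j)
  have h2 := hneg.re_dotProduct_pos hv
  rw [Matrix.neg_mulVec, dotProduct_neg, map_neg] at h2
  rw [h.eigenvalues_eq]
  linarith

lemma count_neg_one {e : Fin 3 → ℝ} (hp : e 0 * e 1 * e 2 < 0) (hs : 0 < e 0 + e 1 + e 2) :
    ((if e 0 < 0 then 1 else 0) + ((if e 1 < 0 then 1 else 0) + (if e 2 < 0 then 1 else 0)) : ℕ) = 1 := by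
  have h0 : e 0 ≠ 0 := fun hz => by rw [hz, zero_mul, zero_mul] at hp; exact lt_irrefl 0 hp
  have h1 : e 1 ≠ 0 := fun hz => by rw [hz, mul_zero, zero_mul] at hp; exact lt_irrefl 0 hp
  have h2 : e 2 ≠ 0 := fun hz => by rw [hz, mul_zero] at hp; exact lt_irrefl 0 hp
  rcases h0.lt_or_gt with h0 | h0 <;> rcases h1.lt_or_gt with h1 | h1 <;>
    rcases h2.lt_or_gt with h2 | h2
  · exfalso; linarith
  · exfalso; have := mul_pos (mul_pos_of_neg_of_neg h0 h1) h2; linarith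
  · exfalso; have := mul_pos_of_neg_of_neg (mul_neg_of_neg_of_pos h0 h1) h2; linarith
  · rw [if_pos h0, if_neg (not_lt.2 h1.le), if_neg (not_lt.2 h2.le)]
  · exfalso; have := mul_pos_of_neg_of_neg (mul_neg_of_pos_of_neg h0 h1) h2; linarith
  · rw [if_neg (not_lt.2 h0.le), if_pos h1, if_neg (not_lt.2 h2.le)]
  · rw [if_neg (not_lt.2 h0.le), if_neg (not_lt.2 h1.le), if_pos h2]
  · exfalso; have := mul_pos (mul_pos h0 h1) h2; linarith

lemma count_neg_two {e : Fin 3 → ℝ} (hp : 0 < e 0 * e 1 * e 2) (hs : e 0 + e 1 + e 2 < 0) :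
    ((if e 0 < 0 then 1 else 0) + ((if e 1 < 0 then 1 else 0) + (if e 2 < 0 then 1 else 0)) : ℕ) = 2 := by
  have h0 : e 0 ≠ 0 := fun hz => by rw [hz, zero_mul, zero_mul] at hp; exact lt_irrefl 0 hp
  have h1 : e 1 ≠ 0 := fun hz => by rw [hz, mul_zero, zero_mul] at hp; exact lt_irrefl 0 hp
  have h2 : e 2 ≠ 0 := fun hz => by rw [hz, mul_zero] at hp; exact lt_irrefl 0 hp
  rcases h0.lt_or_gt with h0 | h0 <;> rcases h1.lt_or_gt with h1 | h1 <;>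
    rcases h2.lt_or_gt with h2 | h2
  · exfalso; have := mul_neg_of_pos_of_neg (mul_pos_of_neg_of_neg h0 h1) h2; linarith
  · rw [if_pos h0, if_pos h1, if_neg (not_lt.2 h2.le)]
  · rw [if_pos h0, if_neg (not_lt.2 h1.le), if_pos h2]
  · exfalso; have := mul_neg_of_neg_of_pos (mul_neg_of_neg_of_pos h0 h1) h2; linarith
  · rw [if_neg (not_lt.2 h0.le), if_pos h1, if_pos h2]
  · exfalso; have := mul_neg_of_neg_of_pos (mul_neg_of_pos_of_neg h0 h1) h2; linarith
  · exfalso; have := mul_neg_of_pos_of_neg (mul_pos h0 h1) h2; linarith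
  · exfalso; linarith
lemma morseIndex3_eq_of_herm {f : MvPolynomial (Fin 3) ℝ} {p : Fin 3 → ℝ}
    (h : (hess3 f p).IsHermitian) :
    morseIndex3 f p = {i : Fin 3 | h.eigenvalues i < 0}.ncard := dif_pos h

lemma morse_zero {f : MvPolynomial (Fin 3) ℝ} {p : Fin 3 → ℝ}
    (hpd : (hess3 f p).PosDef) : morseIndex3 f p = 0 := by
  rw [morseIndex3_eq_of_herm hpd.1, ncard_neg_fin3,
    if_neg (not_lt.2 (hpd.eigenvalues_pos 0).le),
    if_neg (not_lt.2 (hpd.eigenvalues_pos 1).le),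
    if_neg (not_lt.2 (hpd.eigenvalues_pos 2).le)]

lemma morse_three {f : MvPolynomial (Fin 3) ℝ} {p : Fin 3 → ℝ}
    (h : (hess3 f p).IsHermitian) (hpd : (-(hess3 f p)).PosDef) : morseIndex3 f p = 3 := by
  rw [morseIndex3_eq_of_herm h, ncard_neg_fin3,
    if_pos (herm_eigen_neg h hpd 0), if_pos (herm_eigen_neg h hpd 1),
    if_pos (herm_eigen_neg h hpd 2)]

lemma morse_one {f : MvPolynomial (Fin 3) ℝ} {p : Fin 3 → ℝ}
    (h : (hess3 f p).IsHermitian) (hd : (hess3 f p).det < 0)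
    (ht : 0 < (hess3 f p).trace) : morseIndex3 f p = 1 := by
  rw [morseIndex3_eq_of_herm h, ncard_neg_fin3]
  exact count_neg_one (by rw [herm_prod_eigen h]; exact hd)
    (by rw [herm_sum_eigen h]; exact ht)

lemma morse_two {f : MvPolynomial (Fin 3) ℝ} {p : Fin 3 → ℝ}
    (h : (hess3 f p).IsHermitian) (hd : 0 < (hess3 f p).det)
    (ht : (hess3 f p).trace < 0) : morseIndex3 f p = 2 := by
  rw [morseIndex3_eq_of_herm h, ncard_neg_fin3]
  exact count_neg_two (by rw [herm_prod_eigen h]; exact hd)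
    (by rw [herm_sum_eigen h]; exact ht)
lemma det3_entries (a b c d e f g h i : ℝ) :
    (!![a,b,c;d,e,f;g,h,i]).det = a*e*i - a*f*h - b*d*i + b*f*g + c*d*h - c*e*g := by
  simp [Matrix.det_fin_three]

lemma trace3_entries (a b c d e f g h i : ℝ) :
    (!![a,b,c;d,e,f;g,h,i]).trace = a + e + i := by
  simp [Matrix.trace_fin_three]

set_option maxHeartbeats 0 in
/-- For every ε > 0 there is δ₀ > 0 such that for 0 < δ < δ₀ the polynomial
x³ − 3xy² + z³ − 3εz + δz(x²+y²) has exactly eight critical points, all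
nondegenerate, with exactly one of Morse index 0, three of index 1, three of
index 2 and one of index 3. -/
theorem fPert_plus_eight_critical_points (ε : ℝ) (hε : 0 < ε) :
    ∃ δ₀ : ℝ, 0 < δ₀ ∧ ∀ δ : ℝ, 0 < δ → δ < δ₀ →
      {p : Fin 3 → ℝ | IsCriticalPt3 (fPert' ε δ) p}.ncard = 8 ∧
      (∀ p : Fin 3 → ℝ, IsCriticalPt3 (fPert' ε δ) p → (hess3 (fPert' ε δ) p).det ≠ 0) ∧
      {p : Fin 3 → ℝ | IsCriticalPt3 (fPert' ε δ) p ∧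
        morseIndex3 (fPert' ε δ) p = 0}.ncard = 1 ∧
      {p : Fin 3 → ℝ | IsCriticalPt3 (fPert' ε δ) p ∧
        morseIndex3 (fPert' ε δ) p = 1}.ncard = 3 ∧
      {p : Fin 3 → ℝ | IsCriticalPt3 (fPert' ε δ) p ∧
        morseIndex3 (fPert' ε δ) p = 2}.ncard = 3 ∧
      {p : Fin 3 → ℝ | IsCriticalPt3 (fPert' ε δ) p ∧
        morseIndex3 (fPert' ε δ) p = 3}.ncard = 1 := by
  refine ⟨1, one_pos, ?_⟩
  intro δ hδ hδ1
  have hδ3 : (0:ℝ) < 27 + 4 * δ ^ 3 := by nlinarith [pow_pos hδ 3]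
  obtain ⟨s, hs0, hs⟩ : ∃ s : ℝ, 0 < s ∧ s ^ 2 = ε :=
    ⟨Real.sqrt ε, Real.sqrt_pos.2 hε, Real.sq_sqrt hε.le⟩
  obtain ⟨c, hc0, hckey, hcs⟩ :
      ∃ c : ℝ, 0 < c ∧ (27 + 4 * δ ^ 3) * c ^ 2 = 27 * ε ∧ c < s := by
    refine ⟨Real.sqrt (27 * ε / (27 + 4 * δ ^ 3)),
      Real.sqrt_pos.2 (div_pos (by linarith) hδ3), ?_, ?_⟩
    · rw [Real.sq_sqrt (le_of_lt (div_pos (by linarith) hδ3))]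
      field_simp
    · rw [show s = Real.sqrt ε from by
        rw [← hs]; exact (Real.sqrt_sq hs0.le).symm]
      apply Real.sqrt_lt_sqrt (le_of_lt (div_pos (by linarith) hδ3))
      rw [div_lt_iff₀ hδ3]
      nlinarith [pow_pos hδ 3]
  obtain ⟨u, hu0, hu2⟩ : ∃ u : ℝ, 0 < u ∧ u ^ 2 = δ ^ 2 * c ^ 2 / 3 := by
    refine ⟨Real.sqrt (δ ^ 2 * c ^ 2 / 3), Real.sqrt_pos.2 (by positivity), ?_⟩
    rw [Real.sq_sqrt (by positivity)]
  have hdc : 0 < δ * c := mul_pos hδ hc0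
  -- the critical set
  have hsetX : {p : Fin 3 → ℝ | IsCriticalPt3 (fPert' ε δ) p} =
      {pt 0 0 s, pt 0 0 (-s), pt (-(2 * δ * c / 3)) 0 c, pt (2 * δ * c / 3) 0 (-c),
       pt (δ * c / 3) u c, pt (δ * c / 3) (-u) c,
       pt (-(δ * c / 3)) u (-c), pt (-(δ * c / 3)) (-u) (-c)} := by
    ext p
    simp only [Set.mem_setOf_eq, crit_iff, Set.mem_insert_iff, Set.mem_singleton_iff]
    constructor
    · rintro ⟨h0, h1, h2⟩
      have heta := fin3_eta p
      have h1' : p 1 * (2 * δ * p 2 - 6 * p 0) = 0 := by linear_combination h1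
      rcases mul_eq_zero.1 h1' with hy | hxz
      · have h0' : p 0 * (3 * p 0 + 2 * δ * p 2) = 0 := by
          linear_combination h0 + 3 * p 1 * hy
        rcases mul_eq_zero.1 h0' with hx | hx3
        · have hz2 : (p 2 - s) * (p 2 + s) = 0 := by
            linear_combination (1/3) * h2 - (δ/3) * p 0 * hx - (δ/3) * p 1 * hy - hs
          rcases mul_eq_zero.1 hz2 with hz | hz
          · exact Or.inl (by rw [heta]; exact pt_inj.2 ⟨hx, hy, by linarith⟩)
          · exact Or.inr (Or.inl (by rw [heta]; exact pt_inj.2 ⟨hx, hy, by linarith⟩))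
        · have h9 : (27 + 4 * δ ^ 3) * (p 2 ^ 2 - c ^ 2) = 0 := by
            linear_combination 9 * h2 - 9 * δ * p 1 * hy -
              δ * (3 * p 0 - 2 * δ * p 2) * hx3 - hckey
          have hz2 : (p 2 - c) * (p 2 + c) = 0 := by
            rcases mul_eq_zero.1 h9 with h | h
            · exact absurd h hδ3.ne'
            · linear_combination h
          rcases mul_eq_zero.1 hz2 with hz | hz
          · exact Or.inr (Or.inr (Or.inl (by
              rw [heta]
              exact pt_inj.2 ⟨by linear_combination (1/3) * hx3 - (2*δ/3) * hz, hy,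
                by linarith⟩)))
          · exact Or.inr (Or.inr (Or.inr (Or.inl (by
              rw [heta]
              exact pt_inj.2 ⟨by linear_combination (1/3) * hx3 - (2*δ/3) * hz, hy,
                by linarith⟩))))
      · have h9 : (27 + 4 * δ ^ 3) * (p 2 ^ 2 - c ^ 2) = 0 := by
          linear_combination 9 * h2 - hckey + 3 * δ * h0 +
            (2*δ^2*(p 2) + 3*δ*(p 0)) * hxz
        have hzs : p 2 ^ 2 - c ^ 2 = 0 := by
          rcases mul_eq_zero.1 h9 with h | h
          · exact absurd h hδ3.ne'
          · exact h
        have hy2 : (p 1 - u) * (p 1 + u) = 0 := by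
          linear_combination (-1/3) * h0 - hu2 + (δ^2/3) * hzs +
            (-(p 0)/6 - δ*(p 2)/6) * hxz
        have hz2 : (p 2 - c) * (p 2 + c) = 0 := by linear_combination hzs
        rcases mul_eq_zero.1 hz2 with hz | hz
        · have hx : p 0 = δ * c / 3 := by
            linear_combination (-1/6) * hxz + (δ/3) * hz
          rcases mul_eq_zero.1 hy2 with hyy | hyy
          · exact Or.inr (Or.inr (Or.inr (Or.inr (Or.inl (by
              rw [heta]; exact pt_inj.2 ⟨hx, by linarith, by linarith⟩)))))
          · exact Or.inr (Or.inr (Or.inr (Or.inr (Or.inr (Or.inl (by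
              rw [heta]; exact pt_inj.2 ⟨hx, by linarith, by linarith⟩))))))
        · have hx : p 0 = -(δ * c / 3) := by
            linear_combination (-1/6) * hxz + (δ/3) * hz
          rcases mul_eq_zero.1 hy2 with hyy | hyy
          · exact Or.inr (Or.inr (Or.inr (Or.inr (Or.inr (Or.inr (Or.inl (by
              rw [heta]; exact pt_inj.2 ⟨hx, by linarith, by linarith⟩)))))))
          · exact Or.inr (Or.inr (Or.inr (Or.inr (Or.inr (Or.inr (Or.inr (by
              rw [heta]; exact pt_inj.2 ⟨hx, by linarith, by linarith⟩)))))))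
    · rintro (rfl | rfl | rfl | rfl | rfl | rfl | rfl | rfl) <;>
        simp only [pt_zero, pt_one, pt_two]
      · exact ⟨by ring, by ring, by linear_combination 3 * hs⟩
      · exact ⟨by ring, by ring, by linear_combination 3 * hs⟩
      · exact ⟨by ring, by ring, by linear_combination (1/9) * hckey⟩
      · exact ⟨by ring, by ring, by linear_combination (1/9) * hckey⟩
      · exact ⟨by linear_combination (-3) * hu2, by ring,
          by linear_combination (1/9) * hckey + δ * hu2⟩
      · exact ⟨by linear_combination (-3) * hu2, by ring,
          by linear_combination (1/9) * hckey + δ * hu2⟩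
      · exact ⟨by linear_combination (-3) * hu2, by ring,
          by linear_combination (1/9) * hckey + δ * hu2⟩
      · exact ⟨by linear_combination (-3) * hu2, by ring,
          by linear_combination (1/9) * hckey + δ * hu2⟩
    -- pairwise distinctness
  have hne12 : pt 0 0 s ≠ pt 0 0 (-s) := by
    rw [ne_eq, pt_inj]; rintro ⟨e1, e2, e3⟩; linarith
  have hne13 : pt 0 0 s ≠ pt (-(2 * δ * c / 3)) 0 c := by
    rw [ne_eq, pt_inj]; rintro ⟨e1, e2, e3⟩; linarith
  have hne14 : pt 0 0 s ≠ pt (2 * δ * c / 3) 0 (-c) := by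
    rw [ne_eq, pt_inj]; rintro ⟨e1, e2, e3⟩; linarith
  have hne15 : pt 0 0 s ≠ pt (δ * c / 3) u c := by
    rw [ne_eq, pt_inj]; rintro ⟨e1, e2, e3⟩; linarith
  have hne16 : pt 0 0 s ≠ pt (δ * c / 3) (-u) c := by
    rw [ne_eq, pt_inj]; rintro ⟨e1, e2, e3⟩; linarith
  have hne17 : pt 0 0 s ≠ pt (-(δ * c / 3)) u (-c) := by
    rw [ne_eq, pt_inj]; rintro ⟨e1, e2, e3⟩; linarith
  have hne18 : pt 0 0 s ≠ pt (-(δ * c / 3)) (-u) (-c) := by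
    rw [ne_eq, pt_inj]; rintro ⟨e1, e2, e3⟩; linarith
  have hne23 : pt 0 0 (-s) ≠ pt (-(2 * δ * c / 3)) 0 c := by
    rw [ne_eq, pt_inj]; rintro ⟨e1, e2, e3⟩; linarith
  have hne24 : pt 0 0 (-s) ≠ pt (2 * δ * c / 3) 0 (-c) := by
    rw [ne_eq, pt_inj]; rintro ⟨e1, e2, e3⟩; linarith
  have hne25 : pt 0 0 (-s) ≠ pt (δ * c / 3) u c := by
    rw [ne_eq, pt_inj]; rintro ⟨e1, e2, e3⟩; linarith
  have hne26 : pt 0 0 (-s) ≠ pt (δ * c / 3) (-u) c := by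
    rw [ne_eq, pt_inj]; rintro ⟨e1, e2, e3⟩; linarith
  have hne27 : pt 0 0 (-s) ≠ pt (-(δ * c / 3)) u (-c) := by
    rw [ne_eq, pt_inj]; rintro ⟨e1, e2, e3⟩; linarith
  have hne28 : pt 0 0 (-s) ≠ pt (-(δ * c / 3)) (-u) (-c) := by
    rw [ne_eq, pt_inj]; rintro ⟨e1, e2, e3⟩; linarith
  have hne34 : pt (-(2 * δ * c / 3)) 0 c ≠ pt (2 * δ * c / 3) 0 (-c) := by
    rw [ne_eq, pt_inj]; rintro ⟨e1, e2, e3⟩; linarith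
  have hne35 : pt (-(2 * δ * c / 3)) 0 c ≠ pt (δ * c / 3) u c := by
    rw [ne_eq, pt_inj]; rintro ⟨e1, e2, e3⟩; linarith
  have hne36 : pt (-(2 * δ * c / 3)) 0 c ≠ pt (δ * c / 3) (-u) c := by
    rw [ne_eq, pt_inj]; rintro ⟨e1, e2, e3⟩; linarith
  have hne37 : pt (-(2 * δ * c / 3)) 0 c ≠ pt (-(δ * c / 3)) u (-c) := by
    rw [ne_eq, pt_inj]; rintro ⟨e1, e2, e3⟩; linarith
  have hne38 : pt (-(2 * δ * c / 3)) 0 c ≠ pt (-(δ * c / 3)) (-u) (-c) := by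
    rw [ne_eq, pt_inj]; rintro ⟨e1, e2, e3⟩; linarith
  have hne45 : pt (2 * δ * c / 3) 0 (-c) ≠ pt (δ * c / 3) u c := by
    rw [ne_eq, pt_inj]; rintro ⟨e1, e2, e3⟩; linarith
  have hne46 : pt (2 * δ * c / 3) 0 (-c) ≠ pt (δ * c / 3) (-u) c := by
    rw [ne_eq, pt_inj]; rintro ⟨e1, e2, e3⟩; linarith
  have hne47 : pt (2 * δ * c / 3) 0 (-c) ≠ pt (-(δ * c / 3)) u (-c) := by
    rw [ne_eq, pt_inj]; rintro ⟨e1, e2, e3⟩; linarith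
  have hne48 : pt (2 * δ * c / 3) 0 (-c) ≠ pt (-(δ * c / 3)) (-u) (-c) := by
    rw [ne_eq, pt_inj]; rintro ⟨e1, e2, e3⟩; linarith
  have hne56 : pt (δ * c / 3) u c ≠ pt (δ * c / 3) (-u) c := by
    rw [ne_eq, pt_inj]; rintro ⟨e1, e2, e3⟩; linarith
  have hne57 : pt (δ * c / 3) u c ≠ pt (-(δ * c / 3)) u (-c) := by
    rw [ne_eq, pt_inj]; rintro ⟨e1, e2, e3⟩; linarith
  have hne58 : pt (δ * c / 3) u c ≠ pt (-(δ * c / 3)) (-u) (-c) := by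
    rw [ne_eq, pt_inj]; rintro ⟨e1, e2, e3⟩; linarith
  have hne67 : pt (δ * c / 3) (-u) c ≠ pt (-(δ * c / 3)) u (-c) := by
    rw [ne_eq, pt_inj]; rintro ⟨e1, e2, e3⟩; linarith
  have hne68 : pt (δ * c / 3) (-u) c ≠ pt (-(δ * c / 3)) (-u) (-c) := by
    rw [ne_eq, pt_inj]; rintro ⟨e1, e2, e3⟩; linarith
  have hne78 : pt (-(δ * c / 3)) u (-c) ≠ pt (-(δ * c / 3)) (-u) (-c) := by
    rw [ne_eq, pt_inj]; rintro ⟨e1, e2, e3⟩; linarith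
    -- Hessian determinants and traces at the eight points
  have hdet1 : (hess3 (fPert' ε δ) (pt 0 0 s)).det = 24*δ^2*s^3 := by
    rw [hess3_fPert'_pt, det3_entries]; ring
  have hdet2 : (hess3 (fPert' ε δ) (pt 0 0 (-s))).det = -(24*δ^2*s^3) := by
    rw [hess3_fPert'_pt, det3_entries]; ring
  have hdet3 : (hess3 (fPert' ε δ) (pt (-(2 * δ * c / 3)) 0 c)).det
      = -(72*δ^2*c^3 + 32/3*δ^5*c^3) := by
    rw [hess3_fPert'_pt, det3_entries]; ring
  have hdet4 : (hess3 (fPert' ε δ) (pt (2 * δ * c / 3) 0 (-c))).det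
      = 72*δ^2*c^3 + 32/3*δ^5*c^3 := by
    rw [hess3_fPert'_pt, det3_entries]; ring
  have hdet5 : (hess3 (fPert' ε δ) (pt (δ * c / 3) u c)).det
      = -(72*δ^2*c^3 + 32/3*δ^5*c^3) := by
    rw [hess3_fPert'_pt, det3_entries]
    linear_combination (-32*δ^3*c - 216*c) * hu2
  have hdet6 : (hess3 (fPert' ε δ) (pt (δ * c / 3) (-u) c)).det
      = -(72*δ^2*c^3 + 32/3*δ^5*c^3) := by
    rw [hess3_fPert'_pt, det3_entries]
    linear_combination (-32*δ^3*c - 216*c) * hu2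
  have hdet7 : (hess3 (fPert' ε δ) (pt (-(δ * c / 3)) u (-c))).det
      = 72*δ^2*c^3 + 32/3*δ^5*c^3 := by
    rw [hess3_fPert'_pt, det3_entries]
    linear_combination (32*δ^3*c + 216*c) * hu2
  have hdet8 : (hess3 (fPert' ε δ) (pt (-(δ * c / 3)) (-u) (-c))).det
      = 72*δ^2*c^3 + 32/3*δ^5*c^3 := by
    rw [hess3_fPert'_pt, det3_entries]
    linear_combination (32*δ^3*c + 216*c) * hu2
  have hDpos : 0 < 72*δ^2*c^3 + 32/3*δ^5*c^3 := by
    nlinarith [mul_pos (pow_pos hδ 2) (pow_pos hc0 3), mul_pos (pow_pos hδ 5) (pow_pos hc0 3)]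
  have hdp1 : 0 < (hess3 (fPert' ε δ) (pt 0 0 s)).det := by
    rw [hdet1]; nlinarith [mul_pos (pow_pos hδ 2) (pow_pos hs0 3)]
  have hdp2 : (hess3 (fPert' ε δ) (pt 0 0 (-s))).det < 0 := by
    rw [hdet2]; nlinarith [mul_pos (pow_pos hδ 2) (pow_pos hs0 3)]
  have hdp3 : (hess3 (fPert' ε δ) (pt (-(2 * δ * c / 3)) 0 c)).det < 0 := by
    rw [hdet3]; linarith
  have hdp4 : 0 < (hess3 (fPert' ε δ) (pt (2 * δ * c / 3) 0 (-c))).det := by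
    rw [hdet4]; linarith
  have hdp5 : (hess3 (fPert' ε δ) (pt (δ * c / 3) u c)).det < 0 := by
    rw [hdet5]; linarith
  have hdp6 : (hess3 (fPert' ε δ) (pt (δ * c / 3) (-u) c)).det < 0 := by
    rw [hdet6]; linarith
  have hdp7 : 0 < (hess3 (fPert' ε δ) (pt (-(δ * c / 3)) u (-c))).det := by
    rw [hdet7]; linarith
  have hdp8 : 0 < (hess3 (fPert' ε δ) (pt (-(δ * c / 3)) (-u) (-c))).det := by
    rw [hdet8]; linarith
  have htp3 : 0 < (hess3 (fPert' ε δ) (pt (-(2 * δ * c / 3)) 0 c)).trace := by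
    rw [hess3_fPert'_pt, trace3_entries]; nlinarith [hdc, hc0]
  have htp4 : (hess3 (fPert' ε δ) (pt (2 * δ * c / 3) 0 (-c))).trace < 0 := by
    rw [hess3_fPert'_pt, trace3_entries]; nlinarith [hdc, hc0]
  have htp5 : 0 < (hess3 (fPert' ε δ) (pt (δ * c / 3) u c)).trace := by
    rw [hess3_fPert'_pt, trace3_entries]; nlinarith [hdc, hc0]
  have htp6 : 0 < (hess3 (fPert' ε δ) (pt (δ * c / 3) (-u) c)).trace := by
    rw [hess3_fPert'_pt, trace3_entries]; nlinarith [hdc, hc0]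
  have htp7 : (hess3 (fPert' ε δ) (pt (-(δ * c / 3)) u (-c))).trace < 0 := by
    rw [hess3_fPert'_pt, trace3_entries]; nlinarith [hdc, hc0]
  have htp8 : (hess3 (fPert' ε δ) (pt (-(δ * c / 3)) (-u) (-c))).trace < 0 := by
    rw [hess3_fPert'_pt, trace3_entries]; nlinarith [hdc, hc0]
  -- positive definiteness at the extrema
  have hpd1 : (hess3 (fPert' ε δ) (pt 0 0 s)).PosDef := by
    rw [hess3_fPert'_pt]
    have hdiag : (!![6*0 + 2*δ*s, -6*0, 2*δ*0; -6*0, -6*0 + 2*δ*s, 2*δ*0;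
        2*δ*0, 2*δ*0, 6*s]) = Matrix.diagonal ![2*δ*s, 2*δ*s, 6*s] := by
      ext i j
      fin_cases i <;> fin_cases j <;>
        simp [Matrix.diagonal_apply, Matrix.vecHead, Matrix.vecTail] <;> ring
    rw [hdiag]
    refine Matrix.posDef_diagonal_iff.2 fun i => ?_
    fin_cases i
    · show (0:ℝ) < 2*δ*s; nlinarith [mul_pos hδ hs0]
    · show (0:ℝ) < 2*δ*s; nlinarith [mul_pos hδ hs0]
    · show (0:ℝ) < 6*s; linarith
  have hpd2 : (-(hess3 (fPert' ε δ) (pt 0 0 (-s)))).PosDef := by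
    rw [hess3_fPert'_pt]
    have hdiag : -(!![6*0 + 2*δ*(-s), -6*0, 2*δ*0; -6*0, -6*0 + 2*δ*(-s), 2*δ*0;
        2*δ*0, 2*δ*0, 6*(-s)]) = Matrix.diagonal ![2*δ*s, 2*δ*s, 6*s] := by
      ext i j
      fin_cases i <;> fin_cases j <;>
        simp [Matrix.diagonal_apply, Matrix.neg_apply, Matrix.vecHead, Matrix.vecTail] <;> ring
    rw [hdiag]
    refine Matrix.posDef_diagonal_iff.2 fun i => ?_
    fin_cases i
    · show (0:ℝ) < 2*δ*s; nlinarith [mul_pos hδ hs0]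
    · show (0:ℝ) < 2*δ*s; nlinarith [mul_pos hδ hs0]
    · show (0:ℝ) < 6*s; linarith
  -- Morse indices at the eight points
  have hm1 : morseIndex3 (fPert' ε δ) (pt 0 0 s) = 0 := morse_zero hpd1
  have hm2 : morseIndex3 (fPert' ε δ) (pt 0 0 (-s)) = 3 :=
    morse_three (hess3_fPert'_herm ε δ _) hpd2
  have hm3 : morseIndex3 (fPert' ε δ) (pt (-(2 * δ * c / 3)) 0 c) = 1 :=
    morse_one (hess3_fPert'_herm ε δ _) hdp3 htp3
  have hm4 : morseIndex3 (fPert' ε δ) (pt (2 * δ * c / 3) 0 (-c)) = 2 :=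
    morse_two (hess3_fPert'_herm ε δ _) hdp4 htp4
  have hm5 : morseIndex3 (fPert' ε δ) (pt (δ * c / 3) u c) = 1 :=
    morse_one (hess3_fPert'_herm ε δ _) hdp5 htp5
  have hm6 : morseIndex3 (fPert' ε δ) (pt (δ * c / 3) (-u) c) = 1 :=
    morse_one (hess3_fPert'_herm ε δ _) hdp6 htp6
  have hm7 : morseIndex3 (fPert' ε δ) (pt (-(δ * c / 3)) u (-c)) = 2 :=
    morse_two (hess3_fPert'_herm ε δ _) hdp7 htp7
  have hm8 : morseIndex3 (fPert' ε δ) (pt (-(δ * c / 3)) (-u) (-c)) = 2 :=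
    morse_two (hess3_fPert'_herm ε δ _) hdp8 htp8
  -- not-mem facts for cardinality computations
  have hnm1 : pt 0 0 s ∉ ({pt 0 0 (-s), pt (-(2 * δ * c / 3)) 0 c, pt (2 * δ * c / 3) 0 (-c),
      pt (δ * c / 3) u c, pt (δ * c / 3) (-u) c, pt (-(δ * c / 3)) u (-c),
      pt (-(δ * c / 3)) (-u) (-c)} : Set (Fin 3 → ℝ)) := by
    simp only [Set.mem_insert_iff, Set.mem_singleton_iff]
    push_neg
    exact ⟨hne12, hne13, hne14, hne15, hne16, hne17, hne18⟩
  have hnm2 : pt 0 0 (-s) ∉ ({pt (-(2 * δ * c / 3)) 0 c, pt (2 * δ * c / 3) 0 (-c),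
      pt (δ * c / 3) u c, pt (δ * c / 3) (-u) c, pt (-(δ * c / 3)) u (-c),
      pt (-(δ * c / 3)) (-u) (-c)} : Set (Fin 3 → ℝ)) := by
    simp only [Set.mem_insert_iff, Set.mem_singleton_iff]
    push_neg
    exact ⟨hne23, hne24, hne25, hne26, hne27, hne28⟩
  have hnm3 : pt (-(2 * δ * c / 3)) 0 c ∉ ({pt (2 * δ * c / 3) 0 (-c),
      pt (δ * c / 3) u c, pt (δ * c / 3) (-u) c, pt (-(δ * c / 3)) u (-c),
      pt (-(δ * c / 3)) (-u) (-c)} : Set (Fin 3 → ℝ)) := by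
    simp only [Set.mem_insert_iff, Set.mem_singleton_iff]
    push_neg
    exact ⟨hne34, hne35, hne36, hne37, hne38⟩
  have hnm4 : pt (2 * δ * c / 3) 0 (-c) ∉ ({pt (δ * c / 3) u c, pt (δ * c / 3) (-u) c,
      pt (-(δ * c / 3)) u (-c), pt (-(δ * c / 3)) (-u) (-c)} : Set (Fin 3 → ℝ)) := by
    simp only [Set.mem_insert_iff, Set.mem_singleton_iff]
    push_neg
    exact ⟨hne45, hne46, hne47, hne48⟩
  have hnm5 : pt (δ * c / 3) u c ∉ ({pt (δ * c / 3) (-u) c, pt (-(δ * c / 3)) u (-c),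
      pt (-(δ * c / 3)) (-u) (-c)} : Set (Fin 3 → ℝ)) := by
    simp only [Set.mem_insert_iff, Set.mem_singleton_iff]
    push_neg
    exact ⟨hne56, hne57, hne58⟩
  have hnm6 : pt (δ * c / 3) (-u) c ∉ ({pt (-(δ * c / 3)) u (-c),
      pt (-(δ * c / 3)) (-u) (-c)} : Set (Fin 3 → ℝ)) := by
    simp only [Set.mem_insert_iff, Set.mem_singleton_iff]
    push_neg
    exact ⟨hne67, hne68⟩
  have hnm35 : pt (-(2 * δ * c / 3)) 0 c ∉ ({pt (δ * c / 3) u c,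
      pt (δ * c / 3) (-u) c} : Set (Fin 3 → ℝ)) := by
    simp only [Set.mem_insert_iff, Set.mem_singleton_iff]
    push_neg
    exact ⟨hne35, hne36⟩
  have hnm47 : pt (2 * δ * c / 3) 0 (-c) ∉ ({pt (-(δ * c / 3)) u (-c),
      pt (-(δ * c / 3)) (-u) (-c)} : Set (Fin 3 → ℝ)) := by
    simp only [Set.mem_insert_iff, Set.mem_singleton_iff]
    push_neg
    exact ⟨hne47, hne48⟩
  -- finiteness
  have hfin2 : ({pt (-(δ * c / 3)) u (-c), pt (-(δ * c / 3)) (-u) (-c)} :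
      Set (Fin 3 → ℝ)).Finite := (Set.finite_singleton _).insert _
  have hfin3 := hfin2.insert (pt (δ * c / 3) (-u) c)
  have hfin4 := hfin3.insert (pt (δ * c / 3) u c)
  have hfin5 := hfin4.insert (pt (2 * δ * c / 3) 0 (-c))
  have hfin6 := hfin5.insert (pt (-(2 * δ * c / 3)) 0 c)
  have hfin7 := hfin6.insert (pt 0 0 (-s))
  refine ⟨?_, ?_, ?_, ?_, ?_, ?_⟩
  · -- exactly eight critical points
    rw [hsetX, Set.ncard_insert_of_notMem hnm1 hfin7, Set.ncard_insert_of_notMem hnm2 hfin6,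
      Set.ncard_insert_of_notMem hnm3 hfin5, Set.ncard_insert_of_notMem hnm4 hfin4,
      Set.ncard_insert_of_notMem hnm5 hfin3, Set.ncard_insert_of_notMem hnm6 hfin2,
      Set.ncard_pair hne78]
  · -- nondegeneracy
    intro p hp
    have hp' : p ∈ ({pt 0 0 s, pt 0 0 (-s), pt (-(2 * δ * c / 3)) 0 c, pt (2 * δ * c / 3) 0 (-c),
        pt (δ * c / 3) u c, pt (δ * c / 3) (-u) c, pt (-(δ * c / 3)) u (-c),
        pt (-(δ * c / 3)) (-u) (-c)} : Set (Fin 3 → ℝ)) := by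
      rw [← hsetX]; exact hp
    simp only [Set.mem_insert_iff, Set.mem_singleton_iff] at hp'
    rcases hp' with rfl | rfl | rfl | rfl | rfl | rfl | rfl | rfl
    · exact hdp1.ne'
    · exact hdp2.ne
    · exact hdp3.ne
    · exact hdp4.ne'
    · exact hdp5.ne
    · exact hdp6.ne
    · exact hdp7.ne'
    · exact hdp8.ne'
  · -- index 0
    have hset0 : {p : Fin 3 → ℝ | IsCriticalPt3 (fPert' ε δ) p ∧
        morseIndex3 (fPert' ε δ) p = 0} = {pt 0 0 s} := by
      ext q
      simp only [Set.mem_setOf_eq, Set.mem_singleton_iff]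
      constructor
      · rintro ⟨hcq, hmq⟩
        have hq : q ∈ ({pt 0 0 s, pt 0 0 (-s), pt (-(2 * δ * c / 3)) 0 c,
            pt (2 * δ * c / 3) 0 (-c), pt (δ * c / 3) u c, pt (δ * c / 3) (-u) c,
            pt (-(δ * c / 3)) u (-c), pt (-(δ * c / 3)) (-u) (-c)} : Set (Fin 3 → ℝ)) := by
          rw [← hsetX]; exact hcq
        simp only [Set.mem_insert_iff, Set.mem_singleton_iff] at hq
        rcases hq with rfl | rfl | rfl | rfl | rfl | rfl | rfl | rfl
        · rfl
        · rw [hm2] at hmq; norm_num at hmq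
        · rw [hm3] at hmq; norm_num at hmq
        · rw [hm4] at hmq; norm_num at hmq
        · rw [hm5] at hmq; norm_num at hmq
        · rw [hm6] at hmq; norm_num at hmq
        · rw [hm7] at hmq; norm_num at hmq
        · rw [hm8] at hmq; norm_num at hmq
      · rintro rfl
        refine ⟨?_, hm1⟩
        have : pt 0 0 s ∈ {p : Fin 3 → ℝ | IsCriticalPt3 (fPert' ε δ) p} := by
          rw [hsetX]; exact Set.mem_insert _ _
        exact this
    rw [hset0, Set.ncard_singleton]
  · -- index 1
    have hset1 : {p : Fin 3 → ℝ | IsCriticalPt3 (fPert' ε δ) p ∧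
        morseIndex3 (fPert' ε δ) p = 1} =
        {pt (-(2 * δ * c / 3)) 0 c, pt (δ * c / 3) u c, pt (δ * c / 3) (-u) c} := by
      ext q
      simp only [Set.mem_setOf_eq, Set.mem_insert_iff, Set.mem_singleton_iff]
      constructor
      · rintro ⟨hcq, hmq⟩
        have hq : q ∈ ({pt 0 0 s, pt 0 0 (-s), pt (-(2 * δ * c / 3)) 0 c,
            pt (2 * δ * c / 3) 0 (-c), pt (δ * c / 3) u c, pt (δ * c / 3) (-u) c,
            pt (-(δ * c / 3)) u (-c), pt (-(δ * c / 3)) (-u) (-c)} : Set (Fin 3 → ℝ)) := by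
          rw [← hsetX]; exact hcq
        simp only [Set.mem_insert_iff, Set.mem_singleton_iff] at hq
        rcases hq with rfl | rfl | rfl | rfl | rfl | rfl | rfl | rfl
        · rw [hm1] at hmq; norm_num at hmq
        · rw [hm2] at hmq; norm_num at hmq
        · tauto
        · rw [hm4] at hmq; norm_num at hmq
        · tauto
        · tauto
        · rw [hm7] at hmq; norm_num at hmq
        · rw [hm8] at hmq; norm_num at hmq
      · have hc3 : IsCriticalPt3 (fPert' ε δ) (pt (-(2 * δ * c / 3)) 0 c) := by
          have : pt (-(2 * δ * c / 3)) 0 c ∈ {p : Fin 3 → ℝ | IsCriticalPt3 (fPert' ε δ) p} := by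
            rw [hsetX]
            exact Set.mem_insert_iff.2 (Or.inr (Set.mem_insert_iff.2 (Or.inr
              (Set.mem_insert _ _))))
          exact this
        have hc5 : IsCriticalPt3 (fPert' ε δ) (pt (δ * c / 3) u c) := by
          have : pt (δ * c / 3) u c ∈ {p : Fin 3 → ℝ | IsCriticalPt3 (fPert' ε δ) p} := by
            rw [hsetX]
            simp only [Set.mem_insert_iff, Set.mem_singleton_iff]
            tauto
          exact this
        have hc6 : IsCriticalPt3 (fPert' ε δ) (pt (δ * c / 3) (-u) c) := by
          have : pt (δ * c / 3) (-u) c ∈ {p : Fin 3 → ℝ | IsCriticalPt3 (fPert' ε δ) p} := by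
            rw [hsetX]
            simp only [Set.mem_insert_iff, Set.mem_singleton_iff]
            tauto
          exact this
        rintro (rfl | rfl | rfl)
        · exact ⟨hc3, hm3⟩
        · exact ⟨hc5, hm5⟩
        · exact ⟨hc6, hm6⟩
    rw [hset1, Set.ncard_insert_of_notMem hnm35 ((Set.finite_singleton _).insert _),
      Set.ncard_pair hne56]
  · -- index 2
    have hset2 : {p : Fin 3 → ℝ | IsCriticalPt3 (fPert' ε δ) p ∧
        morseIndex3 (fPert' ε δ) p = 2} =
        {pt (2 * δ * c / 3) 0 (-c), pt (-(δ * c / 3)) u (-c), pt (-(δ * c / 3)) (-u) (-c)} := by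
      ext q
      simp only [Set.mem_setOf_eq, Set.mem_insert_iff, Set.mem_singleton_iff]
      constructor
      · rintro ⟨hcq, hmq⟩
        have hq : q ∈ ({pt 0 0 s, pt 0 0 (-s), pt (-(2 * δ * c / 3)) 0 c,
            pt (2 * δ * c / 3) 0 (-c), pt (δ * c / 3) u c, pt (δ * c / 3) (-u) c,
            pt (-(δ * c / 3)) u (-c), pt (-(δ * c / 3)) (-u) (-c)} : Set (Fin 3 → ℝ)) := by
          rw [← hsetX]; exact hcq
        simp only [Set.mem_insert_iff, Set.mem_singleton_iff] at hq
        rcases hq with rfl | rfl | rfl | rfl | rfl | rfl | rfl | rfl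
        · rw [hm1] at hmq; norm_num at hmq
        · rw [hm2] at hmq; norm_num at hmq
        · rw [hm3] at hmq; norm_num at hmq
        · tauto
        · rw [hm5] at hmq; norm_num at hmq
        · rw [hm6] at hmq; norm_num at hmq
        · tauto
        · tauto
      · have hc4 : IsCriticalPt3 (fPert' ε δ) (pt (2 * δ * c / 3) 0 (-c)) := by
          have : pt (2 * δ * c / 3) 0 (-c) ∈ {p : Fin 3 → ℝ | IsCriticalPt3 (fPert' ε δ) p} := by
            rw [hsetX]
            simp only [Set.mem_insert_iff, Set.mem_singleton_iff]
            tauto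
          exact this
        have hc7 : IsCriticalPt3 (fPert' ε δ) (pt (-(δ * c / 3)) u (-c)) := by
          have : pt (-(δ * c / 3)) u (-c) ∈ {p : Fin 3 → ℝ | IsCriticalPt3 (fPert' ε δ) p} := by
            rw [hsetX]
            simp only [Set.mem_insert_iff, Set.mem_singleton_iff]
            tauto
          exact this
        have hc8 : IsCriticalPt3 (fPert' ε δ) (pt (-(δ * c / 3)) (-u) (-c)) := by
          have : pt (-(δ * c / 3)) (-u) (-c) ∈
              {p : Fin 3 → ℝ | IsCriticalPt3 (fPert' ε δ) p} := by
            rw [hsetX]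
            simp only [Set.mem_insert_iff, Set.mem_singleton_iff]
            tauto
          exact this
        rintro (rfl | rfl | rfl)
        · exact ⟨hc4, hm4⟩
        · exact ⟨hc7, hm7⟩
        · exact ⟨hc8, hm8⟩
    rw [hset2, Set.ncard_insert_of_notMem hnm47 ((Set.finite_singleton _).insert _),
      Set.ncard_pair hne78]
  · -- index 3
    have hset3 : {p : Fin 3 → ℝ | IsCriticalPt3 (fPert' ε δ) p ∧
        morseIndex3 (fPert' ε δ) p = 3} = {pt 0 0 (-s)} := by
      ext q
      simp only [Set.mem_setOf_eq, Set.mem_singleton_iff]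
      constructor
      · rintro ⟨hcq, hmq⟩
        have hq : q ∈ ({pt 0 0 s, pt 0 0 (-s), pt (-(2 * δ * c / 3)) 0 c,
            pt (2 * δ * c / 3) 0 (-c), pt (δ * c / 3) u c, pt (δ * c / 3) (-u) c,
            pt (-(δ * c / 3)) u (-c), pt (-(δ * c / 3)) (-u) (-c)} : Set (Fin 3 → ℝ)) := by
          rw [← hsetX]; exact hcq
        simp only [Set.mem_insert_iff, Set.mem_singleton_iff] at hq
        rcases hq with rfl | rfl | rfl | rfl | rfl | rfl | rfl | rfl
        · rw [hm1] at hmq; norm_num at hmq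
        · rfl
        · rw [hm3] at hmq; norm_num at hmq
        · rw [hm4] at hmq; norm_num at hmq
        · rw [hm5] at hmq; norm_num at hmq
        · rw [hm6] at hmq; norm_num at hmq
        · rw [hm7] at hmq; norm_num at hmq
        · rw [hm8] at hmq; norm_num at hmq
      · rintro rfl
        refine ⟨?_, hm2⟩
        have : pt 0 0 (-s) ∈ {p : Fin 3 → ℝ | IsCriticalPt3 (fPert' ε δ) p} := by
          rw [hsetX]
          simp only [Set.mem_insert_iff, Set.mem_singleton_iff]
          tauto
        exact this
    rw [hset3, Set.ncard_singleton]
end
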